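/- arXiv:2407.17821 — 2 statements merged into one kernel-verified Lean document; each statement's English description precedes it below -/
import Mathlib

section
/- Let (G,e1,e2) be a minimum counterexample to the structure theorem, and let M be the subgraph formed by e1 and e2 only. Then: (i) every M-bridge of G with exactly two feet is a single edge between {s1,t1} and {s2,t2}; (ii) for every M-bridge B with four feet that has a 1-separation (B1,B2) separating {s1,t1} from {s2,t2} with V(B1)∩V(B2)={x}, the vertex x is not in V(M); (iii) the family 𝓑_{4b} of M-bridges with four feet containing two vertex-disjoint paths between {s1,t1} and {s2,t2} is nonempty; (iv) every B∈𝓑_{4b} contains two vertex-disjoint paths Q1 and Q2 between {s1,t1} and {s2,t2}, and also a path R between the internal vertices of Q1 and Q2. -/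
open SimpleGraph

-- ============ Minors and planarity ============

/-- `H` is a minor of `G`, witnessed by disjoint connected branch sets. -/
def HasGraphMinor {V W : Type} (G : SimpleGraph V) (H : SimpleGraph W) : Prop :=
  ∃ B : W → Set V,
    (∀ w, (G.induce (B w)).Connected) ∧
    (∀ w₁ w₂, w₁ ≠ w₂ → Disjoint (B w₁) (B w₂)) ∧
    (∀ w₁ w₂, H.Adj w₁ w₂ → ∃ a ∈ B w₁, ∃ b ∈ B w₂, G.Adj a b)

/-- Planarity, via Wagner's characterization: no `K₅` minor and no `K₃,₃` minor. -/
def IsPlanar {V : Type} (G : SimpleGraph V) : Prop :=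
  ¬ HasGraphMinor G (⊤ : SimpleGraph (Fin 5)) ∧
  ¬ HasGraphMinor G (completeBipartiteGraph (Fin 3) (Fin 3))

def AdjBetween {V : Type} (G : SimpleGraph V) (A B : Set V) : Prop :=
  ∃ a ∈ A, ∃ b ∈ B, G.Adj a b

/-- Rooted branch sets: disjoint connected sets, the `i`-th one containing the root `r i`. -/
def RootedBranchSets {V : Type} (G : SimpleGraph V) (B : Fin 4 → Set V) (r : Fin 4 → V) : Prop :=
  (∀ i, r i ∈ B i) ∧ (∀ i, (G.induce (B i)).Connected) ∧
  (∀ i j, i ≠ j → Disjoint (B i) (B j))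

/-- A rooted minor isomorphic to the `4`-cycle `a b c d` (in this cyclic order). -/
def HasFMinorAux {V : Type} (G : SimpleGraph V) (a b c d : V) : Prop :=
  ∃ B : Fin 4 → Set V, RootedBranchSets G B ![a, b, c, d] ∧
    AdjBetween G (B 0) (B 1) ∧ AdjBetween G (B 1) (B 2) ∧
    AdjBetween G (B 2) (B 3) ∧ AdjBetween G (B 3) (B 0)

/-- `G` contains a subgraph contractible to `F` (the 4-cycle `s₁ s₂ t₁ t₂`, so that
`s₁t₁` and `s₂t₂` are the diagonals), up to interchanging `s₁` with `t₁` and `s₂` with `t₂`. -/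
def HasFMinor {V : Type} (G : SimpleGraph V) (s₁ t₁ s₂ t₂ : V) : Prop :=
  HasFMinorAux G s₁ s₂ t₁ t₂ ∨ HasFMinorAux G t₁ s₂ s₁ t₂ ∨
  HasFMinorAux G s₁ t₂ t₁ s₂ ∨ HasFMinorAux G t₁ t₂ s₁ s₂

/-- A rooted `K₄`-minor on the roots `s₁,t₁,s₂,t₂` (this is the `K₄*`-minor containing the
specified edges `e₁ = s₁t₁` and `e₂ = s₂t₂`; it is symmetric under interchanging `s₁` with `t₁`
and `s₂` with `t₂`). -/
def HasK4starMinor {V : Type} (G : SimpleGraph V) (s₁ t₁ s₂ t₂ : V) : Prop :=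
  ∃ B : Fin 4 → Set V, RootedBranchSets G B ![s₁, t₁, s₂, t₂] ∧
    ∀ i j : Fin 4, i ≠ j → AdjBetween G (B i) (B j)

-- ============ Connectivity and separations ============

/-- `G` is `k`-connected: more than `k` vertices, and deleting fewer than `k` vertices
leaves a connected graph. -/
def IsKConnected {V : Type} (k : ℕ) (G : SimpleGraph V) : Prop :=
  k < Nat.card V ∧ ∀ S : Set V, S.ncard < k → (G.induce Sᶜ).Connected

/-- A separation of `G`: a pair of edge-disjoint non-spanning subgraphs whose union is `G`. -/
def IsSeparation {V : Type} (G : SimpleGraph V) (G₁ G₂ : G.Subgraph) : Prop :=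
  G₁ ⊔ G₂ = ⊤ ∧ Disjoint G₁.edgeSet G₂.edgeSet ∧
  G₁.verts ≠ Set.univ ∧ G₂.verts ≠ Set.univ

def IsKSeparation {V : Type} (G : SimpleGraph V) (G₁ G₂ : G.Subgraph) (k : ℕ) : Prop :=
  IsSeparation G G₁ G₂ ∧ (G₁.verts ∩ G₂.verts).ncard = k

/-- The separation `(G₁,G₂)` separates the edges `e₁` and `e₂` (each part contains
precisely one of them; with edge-disjointness this is the displayed condition). -/
def SeparatesEdgePair {V : Type} {G : SimpleGraph V} (G₁ G₂ : G.Subgraph) (e₁ e₂ : Sym2 V) : Prop :=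
  (e₁ ∈ G₁.edgeSet ∧ e₂ ∈ G₂.edgeSet ∧ e₁ ∉ G₂.edgeSet ∧ e₂ ∉ G₁.edgeSet) ∨
  (e₂ ∈ G₁.edgeSet ∧ e₁ ∈ G₂.edgeSet ∧ e₂ ∉ G₂.edgeSet ∧ e₁ ∉ G₁.edgeSet)

/-- A `k`-separation `(B₁,B₂)` of a subgraph `B` of `G`. -/
def IsSubgraphSeparation {V : Type} {G : SimpleGraph V} (B B₁ B₂ : G.Subgraph) (k : ℕ) : Prop :=
  B₁ ⊔ B₂ = B ∧ Disjoint B₁.edgeSet B₂.edgeSet ∧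
  B₁.verts ≠ B.verts ∧ B₂.verts ≠ B.verts ∧ (B₁.verts ∩ B₂.verts).ncard = k

/-- The separation `(B₁,B₂)` separates the vertex sets `U₁` and `U₂`
(each part contains precisely one of them). -/
def SeparatesSets {V : Type} {G : SimpleGraph V} (B₁ B₂ : G.Subgraph) (U₁ U₂ : Set V) : Prop :=
  (U₁ ⊆ B₁.verts ∧ U₂ ⊆ B₂.verts ∧ ¬ U₂ ⊆ B₁.verts ∧ ¬ U₁ ⊆ B₂.verts) ∨
  (U₂ ⊆ B₁.verts ∧ U₁ ⊆ B₂.verts ∧ ¬ U₁ ⊆ B₁.verts ∧ ¬ U₂ ⊆ B₂.verts)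

/-- `(G,Z)` is `4`-connected: every `k`-separation with `Z` inside the first part has
`k ≥ 4`, or `k = 3` and the second part has exactly `4` vertices. -/
def PairFourConnected {V : Type} (G : SimpleGraph V) (Z : Set V) : Prop :=
  ∀ (G₁ G₂ : G.Subgraph) (k : ℕ), IsKSeparation G G₁ G₂ k → Z ⊆ G₁.verts →
    4 ≤ k ∨ (k = 3 ∧ G₂.verts.ncard = 4)

-- ============ Bridges ============

/-- `K` is (the vertex set of) a connected component of `G` with the set `S` deleted. -/
def IsCompAway {V : Type} (G : SimpleGraph V) (S K : Set V) : Prop :=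
  Disjoint K S ∧ (G.induce K).Connected ∧
  ∀ u ∈ K, ∀ v, G.Adj u v → v ∉ S → v ∈ K

/-- The subgraph of `G` induced by the edges of the component `K` together with the
edges linking `K` to the rest of the graph. -/
def bridgeSubgraph {V : Type} (G : SimpleGraph V) (K : Set V) : G.Subgraph where
  verts := K ∪ {v | ∃ u ∈ K, G.Adj v u}
  Adj a b := G.Adj a b ∧ (a ∈ K ∨ b ∈ K)
  adj_sub h := h.1
  edge_vert := by
    rintro a b ⟨hab, ha | hb⟩
    · exact Or.inl ha
    · exact Or.inr ⟨b, hb, hab⟩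
  symm := ⟨fun a b h => ⟨h.1.symm, h.2.symm⟩⟩

/-- A trivial `H`-bridge of `G`: a single edge not in `H` with both ends in `H`. -/
def IsTrivialBridgeOf {V : Type} {G : SimpleGraph V} (H B : G.Subgraph) : Prop :=
  ∃ u v, ∃ h : G.Adj u v, u ∈ H.verts ∧ v ∈ H.verts ∧ s(u, v) ∉ H.edgeSet ∧
    B = G.subgraphOfAdj h

/-- An `H`-bridge of `G`. -/
def IsBridgeOf {V : Type} {G : SimpleGraph V} (H B : G.Subgraph) : Prop :=
  IsTrivialBridgeOf H B ∨
  ∃ K : Set V, IsCompAway G H.verts K ∧ B = bridgeSubgraph G K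

/-- The feet of an `H`-bridge `B`: its vertices lying in `H`. -/
def bridgeFeet {V : Type} {G : SimpleGraph V} (H B : G.Subgraph) : Set V :=
  B.verts ∩ H.verts

/-- `p` is a path contained in the subgraph `B`. -/
def PathIn {V : Type} {G : SimpleGraph V} (B : G.Subgraph) {a b : V} (p : G.Walk a b) : Prop :=
  p.IsPath ∧ (∀ v ∈ p.support, v ∈ B.verts) ∧ ∀ e ∈ p.edges, e ∈ B.edgeSet

/-- `B` contains two vertex-disjoint paths between `{s₁,t₁}` and `{s₂,t₂}`. -/
def TwoDisjointPathsIn {V : Type} {G : SimpleGraph V} (B : G.Subgraph) (s₁ t₁ s₂ t₂ : V) : Prop :=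
  ∃ (a₁ b₁ a₂ b₂ : V) (p₁ : G.Walk a₁ b₁) (p₂ : G.Walk a₂ b₂),
    ({a₁, a₂} : Set V) = {s₁, t₁} ∧ ({b₁, b₂} : Set V) = {s₂, t₂} ∧
    PathIn B p₁ ∧ PathIn B p₂ ∧ ∀ v ∈ p₁.support, v ∉ p₂.support

/-- The subgraph `M` formed by the edges `e₁ = s₁t₁` and `e₂ = s₂t₂` only. -/
def Msub {V : Type} (G : SimpleGraph V) {s₁ t₁ s₂ t₂ : V}
    (h₁ : G.Adj s₁ t₁) (h₂ : G.Adj s₂ t₂) : G.Subgraph :=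
  G.subgraphOfAdj h₁ ⊔ G.subgraphOfAdj h₂
-- ============ Cyclic orders and plane embeddings ============

/-- `target` occurs in this cyclic order on the cyclic list `l`
(up to rotation and reflection). -/
def InCyclicOrder {V : Type} (l target : List V) : Prop :=
  ∃ l' : List V, (List.IsRotated l l' ∨ List.IsRotated l.reverse l') ∧ target.Sublist l'

/-- The graph `H` augmented, for each index `i`, by a new apex vertex joined to all
vertices of `F i`.  Planarity of this augmented graph expresses that `H` has a planar
embedding in which each set `F i` lies on (the boundary of) a face. -/
def facesAugmented {V ι : Type} (H : SimpleGraph V) (F : ι → Set V) : SimpleGraph (V ⊕ ι) :=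
  SimpleGraph.fromRel (fun a b =>
    match a, b with
    | Sum.inl u, Sum.inl v => H.Adj u v
    | Sum.inl u, Sum.inr i => u ∈ F i
    | _, _ => False)

/-- `T` is the vertex set of a triangle of `H`. -/
def IsTriangle {V : Type} (H : SimpleGraph V) (T : Set V) : Prop :=
  ∃ x y z : V, H.Adj x y ∧ H.Adj y z ∧ H.Adj x z ∧ T = {x, y, z}

/-- The three edges of the triangle on `x, y, z`. -/
def triEdges3 {V : Type} (x y z : V) : Set (Sym2 V) := {s(x, y), s(y, z), s(x, z)}

/-- All edges spanned by the triangles in the collection `𝒯`. -/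
def closureEdges {V : Type} (𝒯 : Set (Set V)) : Set (Sym2 V) :=
  {e | ∃ T ∈ 𝒯, ∃ x ∈ T, ∃ y ∈ T, x ≠ y ∧ e = s(x, y)}

-- ============ 3-sums ============

/-- `K` is a component of `G` minus the base `H` all of whose attachments lie in `T`. -/
def AttachedComp {V : Type} (G H : SimpleGraph V) (T K : Set V) : Prop :=
  IsCompAway G H.support K ∧ ∀ u ∈ K, ∀ v, G.Adj u v → v ∈ H.support → v ∈ T

def summandVerts {V : Type} (G H : SimpleGraph V) (T : Set V) : Set V :=
  T ∪ ⋃₀ {K | AttachedComp G H T K}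

/-- The summand over the triangle `T`: the relevant part of `G` with the triangle `T`
completed. -/
def summandGraph {V : Type} (G : SimpleGraph V) (T W : Set V) : SimpleGraph V :=
  SimpleGraph.fromRel (fun a b => (G.Adj a b ∧ a ∈ W ∧ b ∈ W) ∨ (a ∈ T ∧ b ∈ T))

/-- `G` arises from the base graph `H` by `3`-summing `3`-connected graphs to the
triangles in `𝒯` (identifying triangles and deleting `0,1,2` or `3` of the identified
edges). -/
def ArisesBy3Sums {V : Type} (G H : SimpleGraph V) (𝒯 : Set (Set V)) : Prop :=
  (∀ T ∈ 𝒯, IsTriangle H T) ∧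
  (∀ a b, G.Adj a b → a ∈ H.support → b ∈ H.support → H.Adj a b) ∧
  (∀ a b, H.Adj a b → G.Adj a b ∨ ∃ T ∈ 𝒯, a ∈ T ∧ b ∈ T) ∧
  (∀ K, IsCompAway G H.support K → ∃ T ∈ 𝒯, AttachedComp G H T K) ∧
  (∀ T ∈ 𝒯, (∃ K, AttachedComp G H T K) →
    IsKConnected 3 ((summandGraph G T (summandVerts G H T)).induce (summandVerts G H T)))

-- ============ The structures (i)-(iv) ============

/-- Structure (i), with the base plane graph `H` and the triangle collection `𝒯`
exhibited:  `H` is `2`-connected and planar with the edges `s₁t₁` and `s₂t₂` on its outer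
facial cycle `C`, each `T ∈ 𝒯` is a facial triangle, and `G` arises from `H` by `3`-summing
`3`-connected graphs to the triangles in `𝒯`. -/
def StructureIWith {V : Type} (G : SimpleGraph V) (s₁ t₁ s₂ t₂ : V)
    (H : SimpleGraph V) (𝒯 : Set (Set V)) : Prop :=
  ∃ (w : V) (C : H.Walk w w),
    C.IsCycle ∧ s(s₁, t₁) ∈ C.edges ∧ s(s₂, t₂) ∈ C.edges ∧
    IsKConnected 2 (H.induce H.support) ∧
    IsPlanar (facesAugmented H (fun X : Option {T // T ∈ 𝒯} =>
      X.elim {v | v ∈ C.support} Subtype.val)) ∧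
    ArisesBy3Sums G H 𝒯

def StructureI {V : Type} (G : SimpleGraph V) (s₁ t₁ s₂ t₂ : V) : Prop :=
  ∃ H 𝒯, StructureIWith G s₁ t₁ s₂ t₂ H 𝒯

/-- Structure (i) with, in addition, `s₁, s₂, t₂, t₁` occurring on the outer facial
cycle in this (clockwise) cyclic order. -/
def StructureIOrdered {V : Type} (G : SimpleGraph V) (s₁ t₁ s₂ t₂ : V) : Prop :=
  ∃ (H : SimpleGraph V) (𝒯 : Set (Set V)) (w : V) (C : H.Walk w w),
    C.IsCycle ∧ s(s₁, t₁) ∈ C.edges ∧ s(s₂, t₂) ∈ C.edges ∧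
    InCyclicOrder C.support.tail [s₁, s₂, t₂, t₁] ∧
    IsKConnected 2 (H.induce H.support) ∧
    IsPlanar (facesAugmented H (fun X : Option {T // T ∈ 𝒯} =>
      X.elim {v | v ∈ C.support} Subtype.val)) ∧
    ArisesBy3Sums G H 𝒯

def fiveEdges {V : Type} (s₁ t₁ u₁ v₁ : V) : Set (Sym2 V) :=
  {s(s₁, t₁), s(s₁, u₁), s(s₁, v₁), s(t₁, u₁), s(t₁, v₁)}

/-- Structure (ii), with the member `base` of `𝒢₂` and the triangle collection `𝒯`
exhibited: `base` is obtained from a `2`-connected plane graph `H` with distinct vertices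
`u₁, v₁, s₂, t₂` (together with the edge `s₂t₂`) on its outer facial cycle `C` by adding the
two new vertices `s₁, t₁` and the five edges `s₁t₁, s₁u₁, s₁v₁, t₁u₁, t₁v₁`, the collection
`𝒯` consists of the triangles `s₁t₁u₁`, `s₁t₁v₁` and facial triangles of `H`, and `G` arises
from `base` by `3`-summing `3`-connected graphs to the triangles in `𝒯`. -/
def StructureIIWith {V : Type} (G : SimpleGraph V) (s₁ t₁ s₂ t₂ : V)
    (base : SimpleGraph V) (𝒯 : Set (Set V)) : Prop :=
  ∃ (H : SimpleGraph V) (u₁ v₁ : V) (𝒯H : Set (Set V)) (w : V) (C : H.Walk w w),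
    C.IsCycle ∧
    u₁ ∈ C.support ∧ v₁ ∈ C.support ∧ s₂ ∈ C.support ∧ t₂ ∈ C.support ∧
    ([u₁, v₁, s₂, t₂] : List V).Nodup ∧ s(s₂, t₂) ∈ C.edges ∧
    s₁ ∉ H.support ∧ t₁ ∉ H.support ∧ s₁ ≠ t₁ ∧
    IsKConnected 2 (H.induce H.support) ∧
    (∀ T ∈ 𝒯H, IsTriangle H T) ∧
    IsPlanar (facesAugmented H (fun X : Option {T // T ∈ 𝒯H} =>
      X.elim {v | v ∈ C.support} Subtype.val)) ∧
    base = H ⊔ SimpleGraph.fromEdgeSet (fiveEdges s₁ t₁ u₁ v₁) ∧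
    𝒯 = {({s₁, t₁, u₁} : Set V), ({s₁, t₁, v₁} : Set V)} ∪ 𝒯H ∧
    ArisesBy3Sums G base 𝒯

def StructureII {V : Type} (G : SimpleGraph V) (s₁ t₁ s₂ t₂ : V) : Prop :=
  ∃ base 𝒯, StructureIIWith G s₁ t₁ s₂ t₂ base 𝒯

def tenEdges {V : Type} (s₁ t₁ s₂ t₂ u₁ v₁ u₂ v₂ : V) : Set (Sym2 V) :=
  {s(s₁, t₁), s(s₁, u₁), s(s₁, v₁), s(t₁, u₁), s(t₁, v₁),
   s(s₂, t₂), s(s₂, u₂), s(s₂, v₂), s(t₂, u₂), s(t₂, v₂)}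

/-- Structure (iii), with the member `base` of `𝒢₃` and the triangle collection `𝒯`
exhibited: `base` is obtained from `H = K₂` on `u₁,v₁` (with `u₂ = u₁`, `v₂ = v₁`) or from a
`2`-connected plane graph `H` with `v₁, u₁, u₂, v₂` on its outer facial cycle in clockwise
order, by adding the four new vertices `s₁, t₁, s₂, t₂` and ten edges, where `uᵢ ≠ vᵢ` and
`|{u₁,v₁,u₂,v₂}| ≥ 3`, the collection `𝒯` consists of the triangles `s₁t₁u₁`, `s₁t₁v₁`,
`s₂t₂u₂`, `s₂t₂v₂` and facial triangles of `H`, and `G` arises from `base` by `3`-summing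
`3`-connected graphs to the triangles in `𝒯`. -/
def StructureIIIWith {V : Type} (G : SimpleGraph V) (s₁ t₁ s₂ t₂ : V)
    (base : SimpleGraph V) (𝒯 : Set (Set V)) : Prop :=
  ∃ (H : SimpleGraph V) (u₁ v₁ u₂ v₂ : V) (𝒯H : Set (Set V)),
    u₁ ≠ v₁ ∧ u₂ ≠ v₂ ∧ 3 ≤ ({u₁, v₁, u₂, v₂} : Set V).ncard ∧
    ([s₁, t₁, s₂, t₂] : List V).Nodup ∧
    s₁ ∉ H.support ∧ t₁ ∉ H.support ∧ s₂ ∉ H.support ∧ t₂ ∉ H.support ∧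
    u₁ ∈ H.support ∧ v₁ ∈ H.support ∧ u₂ ∈ H.support ∧ v₂ ∈ H.support ∧
    ((H = SimpleGraph.fromEdgeSet {s(u₁, v₁)} ∧ u₂ = u₁ ∧ v₂ = v₁ ∧ 𝒯H = ∅) ∨
     (∃ (w : V) (C : H.Walk w w), C.IsCycle ∧
        IsKConnected 2 (H.induce H.support) ∧
        (∀ T ∈ 𝒯H, IsTriangle H T) ∧
        InCyclicOrder C.support.tail (@List.dedup V (Classical.decEq V) [v₁, u₁, u₂, v₂]) ∧
        (∀ x, x ∈ C.support → x ∈ H.support) ∧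
        v₁ ∈ C.support ∧ u₁ ∈ C.support ∧ u₂ ∈ C.support ∧ v₂ ∈ C.support ∧
        IsPlanar (facesAugmented H (fun X : Option {T // T ∈ 𝒯H} =>
          X.elim {v | v ∈ C.support} Subtype.val)))) ∧
    base = H ⊔ SimpleGraph.fromEdgeSet (tenEdges s₁ t₁ s₂ t₂ u₁ v₁ u₂ v₂) ∧
    𝒯 = ({({s₁, t₁, u₁} : Set V), ({s₁, t₁, v₁} : Set V),
          ({s₂, t₂, u₂} : Set V), ({s₂, t₂, v₂} : Set V)} : Set (Set V)) ∪ 𝒯H ∧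
    ArisesBy3Sums G base 𝒯

def StructureIII {V : Type} (G : SimpleGraph V) (s₁ t₁ s₂ t₂ : V) : Prop :=
  ∃ base 𝒯, StructureIIIWith G s₁ t₁ s₂ t₂ base 𝒯

/-- Structure (iv): every `M`-bridge of `G` is trivial, or has exactly three feet, or has a
`1`-separation `(B₁,B₂)` whose cut vertex `x` is outside `V(M)` with `{sᵢ,tᵢ} ⊆ V(Bᵢ)`. -/
def StructureIV {V : Type} (G : SimpleGraph V) (s₁ t₁ s₂ t₂ : V) (M : G.Subgraph) : Prop :=
  ∀ B : G.Subgraph, IsBridgeOf M B →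
    IsTrivialBridgeOf M B ∨ (bridgeFeet M B).ncard = 3 ∨
    ∃ (B₁ B₂ : G.Subgraph) (x : V),
      IsSubgraphSeparation B B₁ B₂ 1 ∧ B₁.verts ∩ B₂.verts = {x} ∧
      x ∉ M.verts ∧ s₁ ∈ B₁.verts ∧ t₁ ∈ B₁.verts ∧ s₂ ∈ B₂.verts ∧ t₂ ∈ B₂.verts
-- ============ The structure theorem and minimum counterexamples ============

/-- `G` (with the specified nonadjacent edges `e₁ = s₁t₁` and `e₂ = s₂t₂`) satisfies one of
the four conclusions (i)-(iv) of the structure theorem. -/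
def SatisfiesStructure {V : Type} (G : SimpleGraph V) (s₁ t₁ s₂ t₂ : V)
    (h₁ : G.Adj s₁ t₁) (h₂ : G.Adj s₂ t₂) : Prop :=
  StructureI G s₁ t₁ s₂ t₂ ∨ StructureII G s₁ t₁ s₂ t₂ ∨ StructureII G s₂ t₂ s₁ t₁ ∨
  StructureIII G s₁ t₁ s₂ t₂ ∨
  StructureIV G s₁ t₁ s₂ t₂ (Msub G h₁ h₂)

/-- A counterexample to the structure theorem: a graph with two specified nonadjacent
edges `e₁ = s₁t₁`, `e₂ = s₂t₂`, which is `2`-connected, all of whose `2`-separations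
separate `e₁` from `e₂`, which is `K₄*`-free, and which satisfies none of the conclusions
(i)-(iv). -/
def IsCounterexample {V : Type} (G : SimpleGraph V) (s₁ t₁ s₂ t₂ : V) : Prop :=
  ∃ (h₁ : G.Adj s₁ t₁) (h₂ : G.Adj s₂ t₂),
    ([s₁, t₁, s₂, t₂] : List V).Nodup ∧
    IsKConnected 2 G ∧
    (∀ G₁ G₂ : G.Subgraph, IsKSeparation G G₁ G₂ 2 →
      SeparatesEdgePair G₁ G₂ s(s₁, t₁) s(s₂, t₂)) ∧
    ¬ HasK4starMinor G s₁ t₁ s₂ t₂ ∧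
    ¬ SatisfiesStructure G s₁ t₁ s₂ t₂ h₁ h₂

/-- A minimum counterexample: a counterexample with the minimum number of edges among
all (finite) counterexamples. -/
def IsMinCounterexample {V : Type} (G : SimpleGraph V) (s₁ t₁ s₂ t₂ : V) : Prop :=
  IsCounterexample G s₁ t₁ s₂ t₂ ∧
  ∀ (W : Type) (_ : Finite W) (G' : SimpleGraph W) (a₁ b₁ a₂ b₂ : W),
    IsCounterexample G' a₁ b₁ a₂ b₂ → G.edgeSet.ncard ≤ G'.edgeSet.ncard

-- ============ Cuts and bicuts ============

/-- `K` is an `(S,T)`-cut: a set of edges of `G` meeting every path from `S` to `T`. -/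
def IsSTCut {V : Type} (G : SimpleGraph V) (S T : Set V) (K : Set (Sym2 V)) : Prop :=
  K ⊆ G.edgeSet ∧
  ∀ (u v : V), u ∈ S → v ∈ T → ∀ p : G.Walk u v, p.IsPath → ∃ e ∈ p.edges, e ∈ K

/-- The capacity of a set of edges. -/
noncomputable def cutCap {V : Type} (c : Sym2 V → ℕ) (K : Set (Sym2 V)) : ℕ :=
  ∑ᶠ e ∈ K, c e

/-- `K` is an `(s₁,t₁;s₂,t₂)`-bicut: a set of edges of `G` meeting every `s₁`-`t₁` path
and every `s₂`-`t₂` path. -/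
def IsBicut {V : Type} (G : SimpleGraph V) (s₁ t₁ s₂ t₂ : V) (K : Set (Sym2 V)) : Prop :=
  K ⊆ G.edgeSet ∧
  (∀ p : G.Walk s₁ t₁, p.IsPath → ∃ e ∈ p.edges, e ∈ K) ∧
  (∀ p : G.Walk s₂ t₂, p.IsPath → ∃ e ∈ p.edges, e ∈ K)

-- ============ Flows in the arc-vertex form ============

/-- The divergence (net outflow) of `f` at `v`. -/
noncomputable def divg {V : Type} [Fintype V] (f : V → V → ℝ) (v : V) : ℝ :=
  (∑ w, f v w) - (∑ w, f w v)

/-- An `(S,T)`-flow in the network `(G,c)`, in the arc-vertex form, on the digraph `D`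
obtained from `G` by replacing each edge by a pair of opposite arcs. -/
def IsArcFlow {V : Type} [Fintype V] (G : SimpleGraph V) (c : Sym2 V → ℕ)
    (S T : Set V) (f : V → V → ℝ) : Prop :=
  (∀ u v, 0 ≤ f u v) ∧
  (∀ u v, ¬ G.Adj u v → f u v = 0) ∧
  (∀ u v, G.Adj u v → f u v + f v u ≤ (c s(u, v) : ℝ)) ∧
  (∀ v, v ∉ S → v ∉ T → divg f v = 0) ∧
  (∀ v ∈ S, 0 ≤ divg f v) ∧
  (∀ v ∈ T, divg f v ≤ 0)

/-- The value of an `(S,T)`-flow. -/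
noncomputable def flowVal {V : Type} [Fintype V] (S : Set V) (f : V → V → ℝ) : ℝ :=
  ∑ᶠ v ∈ S, divg f v

def IsIntegralArc {V : Type} (f : V → V → ℝ) : Prop := ∀ u v, ∃ n : ℤ, f u v = n

/-- An `(s₁,t₁;s₂,t₂)`-biflow in the arc-vertex form: an `s₁`-`t₁` flow and an `s₂`-`t₂`
flow jointly respecting the capacities. -/
def IsArcBiflow {V : Type} [Fintype V] (G : SimpleGraph V) (c : Sym2 V → ℕ)
    (s₁ t₁ s₂ t₂ : V) (f₁ f₂ : V → V → ℝ) : Prop :=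
  IsArcFlow G c {s₁} {t₁} f₁ ∧ IsArcFlow G c {s₂} {t₂} f₂ ∧
  ∀ u v, G.Adj u v → f₁ u v + f₁ v u + f₂ u v + f₂ v u ≤ (c s(u, v) : ℝ)

-- ============ Biflows in the path-packing form ============

/-- The set `𝒫` of simple paths from `s₁` to `t₁` or from `s₂` to `t₂`. -/
def BPath {V : Type} (G : SimpleGraph V) (s₁ t₁ s₂ t₂ : V) : Type :=
  {p : G.Walk s₁ t₁ // p.IsPath} ⊕ {p : G.Walk s₂ t₂ // p.IsPath}

def bpEdges {V : Type} {G : SimpleGraph V} {s₁ t₁ s₂ t₂ : V}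
    (Q : BPath G s₁ t₁ s₂ t₂) : List (Sym2 V) :=
  Q.elim (fun p => p.1.edges) (fun p => p.1.edges)

/-- A biflow: a nonnegative assignment on `𝒫` respecting the capacity of each edge. -/
def IsBiflow {V : Type} (G : SimpleGraph V) (c : Sym2 V → ℕ) (s₁ t₁ s₂ t₂ : V)
    (f : BPath G s₁ t₁ s₂ t₂ → ℝ) : Prop :=
  (∀ Q, 0 ≤ f Q) ∧
  ∀ e ∈ G.edgeSet, (∑ᶠ Q ∈ {Q | e ∈ bpEdges Q}, f Q) ≤ (c e : ℝ)

/-- The value of a biflow. -/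
noncomputable def biflowVal {V : Type} {G : SimpleGraph V} {s₁ t₁ s₂ t₂ : V}
    (f : BPath G s₁ t₁ s₂ t₂ → ℝ) : ℝ :=
  ∑ᶠ Q, f Q

def IsIntegralBiflow {V : Type} {G : SimpleGraph V} {s₁ t₁ s₂ t₂ : V}
    (f : BPath G s₁ t₁ s₂ t₂ → ℝ) : Prop :=
  ∀ Q, ∃ n : ℤ, f Q = n

/-- The maximum value of an integral biflow equals the minimum capacity of a bicut. -/
def MaxBiflowEqMinBicut {V : Type} (G : SimpleGraph V) (c : Sym2 V → ℕ)
    (s₁ t₁ s₂ t₂ : V) : Prop :=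
  ∃ r : ℝ,
    IsGreatest {x | ∃ f : BPath G s₁ t₁ s₂ t₂ → ℝ,
      IsBiflow G c s₁ t₁ s₂ t₂ f ∧ IsIntegralBiflow f ∧ biflowVal f = x} r ∧
    IsLeast {x | ∃ K : Set (Sym2 V),
      IsBicut G s₁ t₁ s₂ t₂ K ∧ (cutCap c K : ℝ) = x} r

-- ============ Circlets ============

/-- The cyclic successor on `Fin n`. -/
def cnext {n : ℕ} (hn : 0 < n) (i : Fin n) : Fin n := ⟨((i : ℕ) + 1) % n, Nat.mod_lt _ hn⟩

/-- A circlet of `G`: a cyclically ordered set of at least four distinct vertices together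
with a set of edges of `G` of the form `vᵢvᵢ₊₁`. -/
structure Circlet {V : Type} (G : SimpleGraph V) where
  n : ℕ
  hn : 4 ≤ n
  vtx : Fin n → V
  inj : Function.Injective vtx
  edges : Set (Sym2 V)
  edges_sub : edges ⊆ G.edgeSet
  edges_form : ∀ e ∈ edges, ∃ i : Fin n, e = s(vtx i, vtx (cnext (by omega) i))

/-- `C` is an `Ω`-cycle: a cycle containing `V(Ω)` and `E(Ω)`, with the cyclic ordering of
`V(Ω)` agreeing with its ordering on `C`. -/
def IsOmegaCycle {V : Type} {G : SimpleGraph V} (Ω : Circlet G) {w : V}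
    (C : G.Walk w w) : Prop :=
  C.IsCycle ∧ (∀ i, Ω.vtx i ∈ C.support) ∧ (∀ e ∈ Ω.edges, e ∈ C.edges) ∧
  InCyclicOrder C.support.tail (List.ofFn Ω.vtx)

/-- A `C`-path: a path meeting the cycle `C` exactly in its two distinct ends and using no
edge of `C`. -/
def IsCPath {V : Type} {G : SimpleGraph V} {w : V} (C : G.Walk w w) {a b : V}
    (P : G.Walk a b) : Prop :=
  P.IsPath ∧ a ≠ b ∧ a ∈ C.support ∧ b ∈ C.support ∧
  (∀ e ∈ P.edges, e ∉ C.edges) ∧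
  ∀ v ∈ P.support, v ∈ C.support → v = a ∨ v = b

/-- `(P₁,P₂)` is a cross of `C`: vertex-disjoint `C`-paths whose ends interleave on `C`. -/
def IsCross {V : Type} {G : SimpleGraph V} {w : V} (C : G.Walk w w) {a₁ b₁ a₂ b₂ : V}
    (P₁ : G.Walk a₁ b₁) (P₂ : G.Walk a₂ b₂) : Prop :=
  IsCPath C P₁ ∧ IsCPath C P₂ ∧ (∀ v ∈ P₁.support, v ∉ P₂.support) ∧
  InCyclicOrder C.support.tail [a₁, a₂, b₁, b₂]

/-- `A` is the vertex set of the segment of `C` from `a` to `b` avoiding `avoid`. -/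
def IsSegment {V : Type} {G : SimpleGraph V} {w : V} (C : G.Walk w w)
    (a b avoid : V) (A : Set V) : Prop :=
  ∃ p : G.Walk a b, p.IsPath ∧ (∀ e ∈ p.edges, e ∈ C.edges) ∧ avoid ∉ p.support ∧
    A = {v | v ∈ p.support}

namespace MCE
variable {W : Type} {Γ : SimpleGraph W}

/-- Appending two paths that share only the junction vertex gives a path. -/
lemma isPath_append {a u b : W} {p : Γ.Walk a u} {q : Γ.Walk u b}
    (hp : p.IsPath) (hq : q.IsPath)
    (hshare : ∀ y, y ∈ p.support → y ∈ q.support → y = u) :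
    (p.append q).IsPath := by
  rw [Walk.isPath_def, Walk.support_append, List.nodup_append]
  refine ⟨hp.support_nodup, hq.support_nodup.tail, ?_⟩
  intro y hy y' hy' hyy'
  subst hyy'
  have hyq : y ∈ q.support := List.mem_of_mem_tail hy'
  obtain rfl := hshare y hy hyq
  have hcons : q.support = y :: q.support.tail := q.support_eq_cons
  have hnd := hq.support_nodup
  rw [hcons] at hnd
  exact False.elim ((List.nodup_cons.mp hnd).1 hy')

lemma end_not_mem_takeUntil [DecidableEq W] {a w u : W} (p : Γ.Walk a w) (hp : p.IsPath)
    (hu : u ∈ p.support) (hne : u ≠ w) :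
    w ∉ (p.takeUntil u hu).support := by
  intro hw
  have hspec := p.take_spec hu
  have hnd : ((p.takeUntil u hu).append (p.dropUntil u hu)).IsPath := by rw [hspec]; exact hp
  rw [Walk.isPath_def, Walk.support_append, List.nodup_append] at hnd
  have hwd : w ∈ ((p.dropUntil u hu).support).tail := by
    have h1 : w ∈ (p.dropUntil u hu).support := Walk.end_mem_support _
    have h2 : (p.dropUntil u hu).support = u :: (p.dropUntil u hu).support.tail :=
      (p.dropUntil u hu).support_eq_cons
    rw [h2, List.mem_cons] at h1
    rcases h1 with h1 | h1
    · exact absurd h1.symm hne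
    · exact h1
  exact hnd.2.2 w hw w hwd rfl

/-- First vertex of a walk lying in a set `S` (given the endpoint is in `S`). -/
lemma exists_firstHit {u v : W} (p : Γ.Walk u v) (S : Set W) (hv : v ∈ S) :
    ∃ (x : W) (q : Γ.Walk u x), x ∈ S ∧ (∀ y ∈ q.support, y ∈ S → y = x) ∧
      (∀ y ∈ q.support, y ∈ p.support) := by
  induction p with
  | @nil c => exact ⟨c, Walk.nil, hv, by simp, by simp⟩
  | @cons a c d h rest ih =>
    by_cases ha : a ∈ S
    · refine ⟨a, Walk.nil, ha, by simp, by simp⟩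
    · obtain ⟨x, q, hx, hq1, hq2⟩ := ih hv
      refine ⟨x, Walk.cons h q, hx, ?_, ?_⟩
      · intro y hy hyS
        rw [Walk.support_cons, List.mem_cons] at hy
        rcases hy with hy | hy
        · subst hy; exact absurd hyS ha
        · exact hq1 y hy hyS
      · intro y hy
        rw [Walk.support_cons, List.mem_cons] at hy
        rw [Walk.support_cons, List.mem_cons]
        rcases hy with hy | hy
        · exact Or.inl hy
        · exact Or.inr (hq2 y hy)

/-- Transfer a walk along an adjacency implication, preserving support and edges. -/
lemma walk_transfer {Γ' : SimpleGraph W} (h : ∀ a b, Γ.Adj a b → Γ'.Adj a b) :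
    ∀ {u v : W} (p : Γ.Walk u v), ∃ q : Γ'.Walk u v, q.support = p.support ∧ q.edges = p.edges
  | _, _, Walk.nil => ⟨Walk.nil, rfl, rfl⟩
  | _, _, Walk.cons ha rest => by
    obtain ⟨q, h1, h2⟩ := walk_transfer h rest
    exact ⟨Walk.cons (h _ _ ha) q, by simp [h1], by simp [h2]⟩

lemma isPath_concat {a w b : W} {p : Γ.Walk a w} (hp : p.IsPath) (h : Γ.Adj w b)
    (hb : b ∉ p.support) : (p.concat h).IsPath := by
  rw [Walk.concat_eq_append]
  refine isPath_append hp ?_ ?_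
  · rw [Walk.cons_isPath_iff]
    exact ⟨Walk.IsPath.nil, by simp [h.ne]⟩
  · intro y hy hy'
    simp only [Walk.support_cons, Walk.support_nil, List.mem_cons, List.mem_singleton,
      List.not_mem_nil, or_false] at hy'
    rcases hy' with rfl | rfl
    · rfl
    · exact absurd hy hb

lemma mem_support_concat {a w b : W} (p : Γ.Walk a w) (h : Γ.Adj w b) (y : W) :
    y ∈ (p.concat h).support ↔ y ∈ p.support ∨ y = b := by
  rw [Walk.concat_eq_append, Walk.mem_support_append_iff]
  simp only [Walk.support_cons, Walk.support_nil, List.mem_cons, List.mem_singleton,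
    List.not_mem_nil, or_false]
  constructor
  · rintro (h1 | rfl | rfl)
    · exact Or.inl h1
    · exact Or.inl p.end_mem_support
    · exact Or.inr rfl
  · rintro (h1 | rfl)
    · exact Or.inl h1
    · exact Or.inr (Or.inr rfl)

lemma cons_decomp {u v : W} (p : Γ.Walk u v) (h : u ≠ v) :
    ∃ (w : W) (hadj : Γ.Adj u w) (q : Γ.Walk w v), p = Walk.cons hadj q := by
  cases p with
  | nil => exact absurd rfl h
  | cons hadj q => exact ⟨_, hadj, q, rfl⟩

theorem whitney (Γ : SimpleGraph W)
    (h2 : ∀ x u v : W, u ≠ x → v ≠ x → ∃ p : Γ.Walk u v, x ∉ p.support) :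
    ∀ (n : ℕ) (a b : W), a ≠ b → (∃ p : Γ.Walk a b, p.length ≤ n) →
    ∃ p q : Γ.Walk a b, p.IsPath ∧ q.IsPath ∧
      ∀ v ∈ p.support, v ∈ q.support → v = a ∨ v = b := by
  classical
  intro n
  induction n with
  | zero =>
    intro a b hab ⟨p, hp⟩
    have := p.eq_of_length_eq_zero (Nat.le_zero.mp hp)
    exact absurd this hab
  | succ n IH =>
    intro a b hab ⟨p, hp⟩
    -- replace by a path
    set p₀ := p.bypass with hp₀
    have hp₀path : p₀.IsPath := p.bypass_isPath
    have hp₀len : p₀.length ≤ n + 1 := le_trans p.length_bypass_le hp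
    -- decompose from the b end
    obtain ⟨w, hadj, q, hq⟩ := cons_decomp p₀.reverse (Ne.symm hab)
    have hq' : q.IsPath ∧ b ∉ q.support := by
      have : (Walk.cons hadj q).IsPath := by rw [← hq]; exact hp₀path.reverse
      rw [Walk.cons_isPath_iff] at this
      exact ⟨this.1, this.2⟩
    have hwb : Γ.Adj w b := hadj.symm
    have hbq : b ∉ q.support := hq'.2
    by_cases hwa : w = a
    · -- base case: a and b adjacent
      subst hwa
      refine ⟨Walk.cons hwb Walk.nil, Walk.cons hwb Walk.nil, ?_, ?_, ?_⟩
      · rw [Walk.cons_isPath_iff]; exact ⟨Walk.IsPath.nil, by simp [hwb.ne]⟩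
      · rw [Walk.cons_isPath_iff]; exact ⟨Walk.IsPath.nil, by simp [hwb.ne]⟩
      · intro v hv _
        simp only [Walk.support_cons, Walk.support_nil, List.mem_cons, List.mem_singleton,
          List.not_mem_nil, or_false] at hv
        tauto
    · -- inductive case
      have hqlen : q.reverse.length ≤ n := by
        have h1 : p₀.reverse.length = p₀.length := p₀.length_reverse
        rw [hq] at h1
        simp only [Walk.length_cons] at h1
        rw [Walk.length_reverse]
        omega
      obtain ⟨P₁, P₂, hP₁, hP₂, hshare⟩ := IH a w (fun h => hwa h.symm) ⟨q.reverse, hqlen⟩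
      have hwna : w ≠ a := hwa
      have hbna : b ≠ a := Ne.symm hab
      have hbnw : b ≠ w := hwb.ne'
      -- Case analysis helper 1 : b lies on one of the two paths
      have case1 : ∀ (P₁ P₂ : Γ.Walk a w), P₁.IsPath → P₂.IsPath →
          (∀ v ∈ P₁.support, v ∈ P₂.support → v = a ∨ v = w) →
          b ∈ P₁.support →
          ∃ p q : Γ.Walk a b, p.IsPath ∧ q.IsPath ∧
            ∀ v ∈ p.support, v ∈ q.support → v = a ∨ v = b := by
        intro P₁ P₂ hP₁ hP₂ hshare hb
        have hbP₂ : b ∉ P₂.support := by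
          intro hb₂
          rcases hshare b hb hb₂ with h | h
          · exact hbna h
          · exact hbnw h
        refine ⟨P₁.takeUntil b hb, P₂.concat hwb, hP₁.takeUntil hb, isPath_concat hP₂ hwb hbP₂, ?_⟩
        intro v hv hv'
        rw [mem_support_concat] at hv'
        rcases hv' with hv' | rfl
        · have hvP₁ : v ∈ P₁.support := P₁.support_takeUntil_subset hb hv
          rcases hshare v hvP₁ hv' with h | h
          · exact Or.inl h
          · subst h
            exact absurd hv (end_not_mem_takeUntil P₁ hP₁ hb hbnw)
        · exact Or.inr rfl
      by_cases hb1 : b ∈ P₁.support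
      · exact case1 P₁ P₂ hP₁ hP₂ hshare hb1
      by_cases hb2 : b ∈ P₂.support
      · exact case1 P₂ P₁ hP₂ hP₁ (fun v h1 h2 => hshare v h2 h1) hb2
      -- b is on neither path: route a new path from b to the union
      · obtain ⟨W₀, hW₀⟩ := h2 w b a hbnw (fun h => hwa h.symm)
        have haS : a ∈ {v | v ∈ P₁.support ∨ v ∈ P₂.support} := Or.inl P₁.start_mem_support
        obtain ⟨u, q₀, huS, hq₀1, hq₀2⟩ := exists_firstHit W₀ {v | v ∈ P₁.support ∨ v ∈ P₂.support} haS
        set q' := (q₀.toPath : Γ.Walk b u) with hq'def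
        have hq'path : q'.IsPath := q₀.toPath.isPath
        have hq'sub : ∀ y ∈ q'.support, y ∈ q₀.support := fun y hy => q₀.support_toPath_subset hy
        have hq'first : ∀ y ∈ q'.support, (y ∈ P₁.support ∨ y ∈ P₂.support) → y = u :=
          fun y hy hyS => hq₀1 y (hq'sub y hy) hyS
        have hq'w : w ∉ q'.support := fun h => hW₀ (hq₀2 w (hq'sub w h))
        have hunw : u ≠ w := fun h => hq'w (h ▸ q'.end_mem_support)
        -- helper for the two symmetric subcases
        have case2 : ∀ (P₁ P₂ : Γ.Walk a w), P₁.IsPath → P₂.IsPath →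
            (∀ v ∈ P₁.support, v ∈ P₂.support → v = a ∨ v = w) →
            b ∉ P₂.support →
            (∀ y ∈ q'.support, (y ∈ P₁.support ∨ y ∈ P₂.support) → y = u) →
            u ∈ P₁.support →
            ∃ p q : Γ.Walk a b, p.IsPath ∧ q.IsPath ∧
              ∀ v ∈ p.support, v ∈ q.support → v = a ∨ v = b := by
          intro P₁ P₂ hP₁ hP₂ hshare hbP₂ hfirst hu
          have hA : ((P₁.takeUntil u hu).append q'.reverse).IsPath := by
            refine isPath_append (hP₁.takeUntil hu) hq'path.reverse ?_
            intro y hy hy'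
            rw [Walk.support_reverse, List.mem_reverse] at hy'
            exact hfirst y hy' (Or.inl (P₁.support_takeUntil_subset hu hy))
          refine ⟨(P₁.takeUntil u hu).append q'.reverse, P₂.concat hwb,
            hA, isPath_concat hP₂ hwb hbP₂, ?_⟩
          intro v hv hv'
          rw [mem_support_concat] at hv'
          rcases hv' with hv' | rfl
          · rw [Walk.mem_support_append_iff] at hv
            rcases hv with hv | hv
            · have hvP₁ : v ∈ P₁.support := P₁.support_takeUntil_subset hu hv
              rcases hshare v hvP₁ hv' with h | h
              · exact Or.inl h
              · subst h
                exact absurd hv (end_not_mem_takeUntil P₁ hP₁ hu hunw)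
            · rw [Walk.support_reverse, List.mem_reverse] at hv
              have := hfirst v hv (Or.inr hv')
              subst this
              rcases hshare v hu hv' with h | h
              · exact Or.inl h
              · exact absurd h hunw
          · exact Or.inr rfl
        rcases huS with hu | hu
        · exact case2 P₁ P₂ hP₁ hP₂ hshare hb2 hq'first hu
        · exact case2 P₂ P₁ hP₂ hP₁ (fun v h1 h2 => hshare v h2 h1) hb1
            (fun y hy hyS => hq'first y hy (Or.symm hyS)) hu

section Gadget
variable {V : Type} (Γ : SimpleGraph V) (S T : Set V)

/-- Vertices lying on some `S`–`T` path. -/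
def DSet : Set V := {v | ∃ s ∈ S, ∃ t ∈ T, ∃ p : Γ.Walk s t, p.IsPath ∧ v ∈ p.support}

/-- The auxiliary graph: `Γ` restricted to `DSet`, plus two apexes
`inr false` (joined to `S`) and `inr true` (joined to `T`). -/
def Gad : SimpleGraph ({v : V // v ∈ DSet Γ S T} ⊕ Bool) where
  Adj x y := match x, y with
    | .inl u, .inl v => Γ.Adj u.1 v.1
    | .inl u, .inr true => u.1 ∈ T
    | .inl u, .inr false => u.1 ∈ S
    | .inr true, .inl u => u.1 ∈ T
    | .inr false, .inl u => u.1 ∈ S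
    | .inr _, .inr _ => False
  symm := by constructor; rintro (u | (_ | _)) (v | (_ | _)) h <;> first | exact h | exact h.symm
  loopless := by constructor; rintro (u | (_ | _)) h <;> first | exact Γ.irrefl h | exact h

variable {Γ S T}

lemma lift_walk : ∀ {u v : V} (p : Γ.Walk u v) (hu : u ∈ DSet Γ S T) (hv : v ∈ DSet Γ S T)
    (hD : ∀ w ∈ p.support, w ∈ DSet Γ S T),
    ∃ q : (Gad Γ S T).Walk (.inl ⟨u, hu⟩) (.inl ⟨v, hv⟩),
      ∀ y ∈ q.support, ∃ (w : V) (h : w ∈ DSet Γ S T), w ∈ p.support ∧ y = .inl ⟨w, h⟩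
  | _, _, Walk.nil, hu, hv, hD => by
    refine ⟨Walk.nil, ?_⟩
    intro y hy
    simp only [Walk.support_nil, List.mem_singleton] at hy
    exact ⟨_, hu, Walk.start_mem_support _, hy⟩
  | _, _, Walk.cons (v := c) ha rest, hu, hv, hD => by
    have hc : c ∈ DSet Γ S T := hD c (by simp)
    obtain ⟨q, hq⟩ := lift_walk rest hc hv (fun w hw => hD w (by simp [hw]))
    refine ⟨Walk.cons (show (Gad Γ S T).Adj (.inl ⟨_, hu⟩) (.inl ⟨c, hc⟩) from ha) q, ?_⟩
    intro y hy
    rw [Walk.support_cons, List.mem_cons] at hy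
    rcases hy with rfl | hy
    · exact ⟨_, hu, Walk.start_mem_support _, rfl⟩
    · obtain ⟨w, h, hw, rfl⟩ := hq y hy
      exact ⟨w, h, by simp [hw], rfl⟩

lemma strip_aux : ∀ {x z : {v : V // v ∈ DSet Γ S T} ⊕ Bool}
    (p : (Gad Γ S T).Walk x z), p.IsPath → (Sum.inr false) ∉ p.support →
    z = Sum.inr true →
    ∀ (u : {v : V // v ∈ DSet Γ S T}), x = Sum.inl u →
    ∃ (t : V) (ht : t ∈ T) (q : Γ.Walk u.1 t), q.IsPath ∧
      ∀ y ∈ q.support, ∃ (h : y ∈ DSet Γ S T), Sum.inl ⟨y, h⟩ ∈ p.support := by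
  intro x z p
  induction p with
  | nil => rintro _ _ rfl u ⟨⟩
  | @cons x y _ hadj rest ih =>
    intro hp hf hz u hx
    subst hz
    subst hx
    rcases y with w | b
    · -- next vertex is in the core
      have hrest : rest.IsPath := hp.of_cons
      have hfrest : Sum.inr false ∉ rest.support := fun h => hf (by simp [h])
      obtain ⟨t, ht, q, hq, hmem⟩ := ih hrest hfrest rfl w rfl
      have hadj' : Γ.Adj u.1 w.1 := hadj
      have huq : u.1 ∉ q.support := by
        intro hmem'
        obtain ⟨h', hin⟩ := hmem u.1 hmem'
        have : (⟨u.1, h'⟩ : {v : V // v ∈ DSet Γ S T}) = u := Subtype.ext rfl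
        rw [this] at hin
        rw [Walk.cons_isPath_iff] at hp
        exact hp.2 hin
      refine ⟨t, ht, Walk.cons hadj' q, hq.cons huq, ?_⟩
      intro z hz
      rw [Walk.support_cons, List.mem_cons] at hz
      rcases hz with rfl | hz
      · exact ⟨u.2, by simp⟩
      · obtain ⟨h', hin⟩ := hmem z hz
        exact ⟨h', by simp [hin]⟩
    · -- next vertex is an apex
      rcases b with _ | _
      · exact absurd (by simp : Sum.inr false ∈ _) hf
      · -- reached the sink; remaining walk must be nil
        have hrest : rest.IsPath := hp.of_cons
        have : rest = Walk.nil := Walk.isPath_iff_eq_nil.mp hrest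
        subst this
        have ht : u.1 ∈ T := hadj
        refine ⟨u.1, ht, Walk.nil, Walk.IsPath.nil, ?_⟩
        intro y hy
        simp only [Walk.support_nil, List.mem_singleton] at hy
        subst hy
        exact ⟨u.2, by simp⟩

end Gadget

section Menger
variable {V : Type} {Γ : SimpleGraph V} {S T : Set V}

lemma reach_t {w t : V} (hw : w ∈ DSet Γ S T) (ht' : t ∈ T) (r : Γ.Walk w t)
    (hD : ∀ y ∈ r.support, y ∈ DSet Γ S T) :
    ∃ q : (Gad Γ S T).Walk (.inl ⟨w, hw⟩) (.inr true),
      ∀ y ∈ q.support, y = Sum.inr true ∨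
        ∃ (w' : V) (h' : w' ∈ DSet Γ S T), w' ∈ r.support ∧ y = Sum.inl ⟨w', h'⟩ := by
  have htD : t ∈ DSet Γ S T := hD t r.end_mem_support
  obtain ⟨q0, hq0⟩ := lift_walk r hw htD hD
  have hadj : (Gad Γ S T).Adj (.inl ⟨t, htD⟩) (.inr true) := ht'
  refine ⟨q0.concat hadj, ?_⟩
  intro y hy
  rw [MCE.mem_support_concat] at hy
  rcases hy with hy | rfl
  · exact Or.inr (hq0 y hy)
  · exact Or.inl rfl

lemma reach_s {w s : V} (hw : w ∈ DSet Γ S T) (hs' : s ∈ S) (r : Γ.Walk w s)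
    (hD : ∀ y ∈ r.support, y ∈ DSet Γ S T) :
    ∃ q : (Gad Γ S T).Walk (.inl ⟨w, hw⟩) (.inr false),
      ∀ y ∈ q.support, y = Sum.inr false ∨
        ∃ (w' : V) (h' : w' ∈ DSet Γ S T), w' ∈ r.support ∧ y = Sum.inl ⟨w', h'⟩ := by
  have hsD : s ∈ DSet Γ S T := hD s r.end_mem_support
  obtain ⟨q0, hq0⟩ := lift_walk r hw hsD hD
  have hadj : (Gad Γ S T).Adj (.inl ⟨s, hsD⟩) (.inr false) := hs'
  refine ⟨q0.concat hadj, ?_⟩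
  intro y hy
  rw [MCE.mem_support_concat] at hy
  rcases hy with hy | rfl
  · exact Or.inr (hq0 y hy)
  · exact Or.inl rfl

lemma mem_take_not_mem_drop [DecidableEq V] {s t w z : V} (π : Γ.Walk s t) (hπ : π.IsPath)
    (hwπ : w ∈ π.support) (hzw : z ≠ w) (hzt : z ∈ (π.takeUntil w hwπ).support) :
    z ∉ (π.dropUntil w hwπ).support := by
  intro hzd
  have hspec := π.take_spec hwπ
  have hnd : ((π.takeUntil w hwπ).append (π.dropUntil w hwπ)).IsPath := by rw [hspec]; exact hπ
  rw [Walk.isPath_def, Walk.support_append, List.nodup_append] at hnd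
  have h2 : (π.dropUntil w hwπ).support = w :: (π.dropUntil w hwπ).support.tail :=
    (π.dropUntil w hwπ).support_eq_cons
  rw [h2, List.mem_cons] at hzd
  rcases hzd with rfl | hzd
  · exact hzw rfl
  · exact hnd.2.2 z hzt z hzd rfl

/-- From any core vertex, reach the sink avoiding the source apex. -/
lemma to_sink (w : {v : V // v ∈ DSet Γ S T}) :
    ∃ q : (Gad Γ S T).Walk (.inl w) (.inr true), Sum.inr false ∉ q.support := by
  obtain ⟨s, hs, t, ht, π, hπ, hwπ⟩ := w.2
  classical
  obtain ⟨q, hq⟩ := reach_t w.2 ht (π.dropUntil w.1 hwπ)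
    (fun y hy => ⟨s, hs, t, ht, π, hπ, π.support_dropUntil_subset hwπ hy⟩)
  refine ⟨q, fun hmem => ?_⟩
  rcases hq _ hmem with h | ⟨w', h', _, h2⟩ <;> simp_all

lemma to_source (w : {v : V // v ∈ DSet Γ S T}) :
    ∃ q : (Gad Γ S T).Walk (.inl w) (.inr false), Sum.inr true ∉ q.support := by
  obtain ⟨s, hs, t, ht, π, hπ, hwπ⟩ := w.2
  classical
  obtain ⟨q, hq⟩ := reach_s w.2 hs (π.takeUntil w.1 hwπ).reverse
    (fun y hy => ⟨s, hs, t, ht, π, hπ,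
      π.support_takeUntil_subset hwπ (by rwa [Walk.support_reverse, List.mem_reverse] at hy)⟩)
  refine ⟨q, fun hmem => ?_⟩
  rcases hq _ hmem with h | ⟨w', h', _, h2⟩ <;> simp_all

/-- From any core vertex `w`, reach the sink or the source avoiding a given core vertex `z`. -/
lemma to_avoid (w : {v : V // v ∈ DSet Γ S T}) (z : V) (hzw : z ≠ w.1) :
    (∃ q : (Gad Γ S T).Walk (.inl w) (.inr true),
      (∀ hz : z ∈ DSet Γ S T, Sum.inl ⟨z, hz⟩ ∉ q.support) ∧ Sum.inr false ∉ q.support) ∨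
    (∃ q : (Gad Γ S T).Walk (.inl w) (.inr false),
      (∀ hz : z ∈ DSet Γ S T, Sum.inl ⟨z, hz⟩ ∉ q.support) ∧ Sum.inr true ∉ q.support) := by
  classical
  obtain ⟨s, hs, t, ht, π, hπ, hwπ⟩ := w.2
  by_cases hzt : z ∈ (π.takeUntil w.1 hwπ).support
  · left
    have hzd : z ∉ (π.dropUntil w.1 hwπ).support := mem_take_not_mem_drop π hπ hwπ hzw hzt
    obtain ⟨q, hq⟩ := reach_t w.2 ht (π.dropUntil w.1 hwπ)
      (fun y hy => ⟨s, hs, t, ht, π, hπ, π.support_dropUntil_subset hwπ hy⟩)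
    refine ⟨q, fun hz hmem => ?_, fun hmem => ?_⟩
    · rcases hq _ hmem with h | ⟨w', h', hw', h2⟩
      · simp at h
      · rw [Sum.inl.injEq] at h2
        have : z = w' := congrArg Subtype.val h2
        exact hzd (this ▸ hw')
    · rcases hq _ hmem with h | ⟨w', h', _, h2⟩ <;> simp_all
  · right
    obtain ⟨q, hq⟩ := reach_s w.2 hs (π.takeUntil w.1 hwπ).reverse
      (fun y hy => ⟨s, hs, t, ht, π, hπ,
        π.support_takeUntil_subset hwπ (by rwa [Walk.support_reverse, List.mem_reverse] at hy)⟩)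
    refine ⟨q, fun hz hmem => ?_, fun hmem => ?_⟩
    · rcases hq _ hmem with h | ⟨w', h', hw', h2⟩
      · simp at h
      · rw [Sum.inl.injEq] at h2
        have : z = w' := congrArg Subtype.val h2
        rw [Walk.support_reverse, List.mem_reverse] at hw'
        exact hzt (this ▸ hw')
    · rcases hq _ hmem with h | ⟨w', h', _, h2⟩ <;> simp_all

theorem menger2 {V : Type} [Nonempty V] (Γ : SimpleGraph V) (S T : Set V)
    (hx : ∀ x : V, ∃ s ∈ S, ∃ t ∈ T, ∃ p : Γ.Walk s t, p.IsPath ∧ x ∉ p.support) :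
    ∃ (a₁ a₂ b₁ b₂ : V) (p₁ : Γ.Walk a₁ b₁) (p₂ : Γ.Walk a₂ b₂),
      a₁ ∈ S ∧ a₂ ∈ S ∧ b₁ ∈ T ∧ b₂ ∈ T ∧ p₁.IsPath ∧ p₂.IsPath ∧
      ∀ v ∈ p₁.support, v ∉ p₂.support := by
  classical
  -- the spine: a source-to-sink walk avoiding a given core vertex
  have spine : ∀ z : V, ∃ q : (Gad Γ S T).Walk (.inr false) (.inr true),
      ∀ hz : z ∈ DSet Γ S T, Sum.inl ⟨z, hz⟩ ∉ q.support := by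
    intro z
    obtain ⟨s, hs, t, ht, π, hπ, hzπ⟩ := hx z
    have hsD : s ∈ DSet Γ S T := ⟨s, hs, t, ht, π, hπ, π.start_mem_support⟩
    have htD : t ∈ DSet Γ S T := ⟨s, hs, t, ht, π, hπ, π.end_mem_support⟩
    obtain ⟨q0, hq0⟩ := lift_walk π hsD htD (fun y hy => ⟨s, hs, t, ht, π, hπ, hy⟩)
    have hadjS : (Gad Γ S T).Adj (.inr false) (.inl ⟨s, hsD⟩) := hs
    have hadjT : (Gad Γ S T).Adj (.inl ⟨t, htD⟩) (.inr true) := ht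
    refine ⟨Walk.cons hadjS (q0.concat hadjT), fun hz hmem => ?_⟩
    rw [Walk.support_cons, List.mem_cons] at hmem
    rcases hmem with h | hmem
    · simp at h
    · rw [mem_support_concat] at hmem
      rcases hmem with hmem | h
      · obtain ⟨w', h', hw', h2⟩ := hq0 _ hmem
        rw [Sum.inl.injEq] at h2
        have : z = w' := congrArg Subtype.val h2
        exact hzπ (this ▸ hw')
      · simp at h
  -- 2-connectivity of the gadget
  have h2g : ∀ x u v : ({v : V // v ∈ DSet Γ S T} ⊕ Bool), u ≠ x → v ≠ x →
      ∃ p : (Gad Γ S T).Walk u v, x ∉ p.support := by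
    rintro (z | (_ | _)) u v hu hv
    · -- x is a core vertex
      have toB : ∀ u : ({v : V // v ∈ DSet Γ S T} ⊕ Bool), u ≠ Sum.inl z →
          ∃ q : (Gad Γ S T).Walk u (.inr true), Sum.inl z ∉ q.support := by
        rintro (w | (_ | _)) hne
        · have hzw : z.1 ≠ w.1 := by
            intro h
            exact hne (congrArg Sum.inl (Subtype.ext h.symm))
          rcases to_avoid w z.1 hzw with ⟨q, hq, _⟩ | ⟨q, hq, _⟩
          · refine ⟨q, fun hmem => ?_⟩
            have := hq z.2
            rw [show (⟨z.1, z.2⟩ : {v : V // v ∈ DSet Γ S T}) = z from Subtype.ext rfl] at this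
            exact this hmem
          · obtain ⟨sp, hsp⟩ := spine z.1
            refine ⟨q.append sp, fun hmem => ?_⟩
            rw [Walk.mem_support_append_iff] at hmem
            rcases hmem with hmem | hmem
            · have := hq z.2
              rw [show (⟨z.1, z.2⟩ : {v : V // v ∈ DSet Γ S T}) = z from Subtype.ext rfl] at this
              exact this hmem
            · have := hsp z.2
              rw [show (⟨z.1, z.2⟩ : {v : V // v ∈ DSet Γ S T}) = z from Subtype.ext rfl] at this
              exact this hmem
        · -- u = source apex: follow the spine
          obtain ⟨sp, hsp⟩ := spine z.1
          refine ⟨sp, fun hmem => ?_⟩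
          have := hsp z.2
          rw [show (⟨z.1, z.2⟩ : {v : V // v ∈ DSet Γ S T}) = z from Subtype.ext rfl] at this
          exact this hmem
        · exact ⟨Walk.nil, by simp⟩
      obtain ⟨qu, hqu⟩ := toB u hu
      obtain ⟨qv, hqv⟩ := toB v hv
      refine ⟨qu.append qv.reverse, fun hmem => ?_⟩
      rw [Walk.mem_support_append_iff] at hmem
      rcases hmem with h | h
      · exact hqu h
      · rw [Walk.support_reverse, List.mem_reverse] at h
        exact hqv h
    · -- x = source apex
      have toB : ∀ u : ({v : V // v ∈ DSet Γ S T} ⊕ Bool), u ≠ Sum.inr false →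
          ∃ q : (Gad Γ S T).Walk u (.inr true), Sum.inr false ∉ q.support := by
        rintro (w | (_ | _)) hne
        · exact to_sink w
        · exact absurd rfl hne
        · exact ⟨Walk.nil, by simp⟩
      obtain ⟨qu, hqu⟩ := toB u hu
      obtain ⟨qv, hqv⟩ := toB v hv
      refine ⟨qu.append qv.reverse, fun hmem => ?_⟩
      rw [Walk.mem_support_append_iff] at hmem
      rcases hmem with h | h
      · exact hqu h
      · rw [Walk.support_reverse, List.mem_reverse] at h
        exact hqv h
    · -- x = sink apex
      have toA : ∀ u : ({v : V // v ∈ DSet Γ S T} ⊕ Bool), u ≠ Sum.inr true →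
          ∃ q : (Gad Γ S T).Walk u (.inr false), Sum.inr true ∉ q.support := by
        rintro (w | (_ | _)) hne
        · exact to_source w
        · exact ⟨Walk.nil, by simp⟩
        · exact absurd rfl hne
      obtain ⟨qu, hqu⟩ := toA u hu
      obtain ⟨qv, hqv⟩ := toA v hv
      refine ⟨qu.append qv.reverse, fun hmem => ?_⟩
      rw [Walk.mem_support_append_iff] at hmem
      rcases hmem with h | h
      · exact hqu h
      · rw [Walk.support_reverse, List.mem_reverse] at h
        exact hqv h
  -- apply Whitney's argument
  obtain ⟨w0, _⟩ := spine (Classical.arbitrary V)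
  have hab : (Sum.inr false : {v : V // v ∈ DSet Γ S T} ⊕ Bool) ≠ Sum.inr true := by simp
  obtain ⟨P, Q, hP, hQ, hshare⟩ :=
    whitney (Gad Γ S T) h2g w0.length (Sum.inr false) (Sum.inr true) hab ⟨w0, le_refl _⟩
  -- strip the two paths
  obtain ⟨yP, hadjP, restP, hPe⟩ := cons_decomp P hab
  obtain ⟨yQ, hadjQ, restQ, hQe⟩ := cons_decomp Q hab
  rcases yP with σ₁ | bP
  on_goal 2 => rcases bP with _ | _ <;> exact hadjP.elim
  rcases yQ with σ₂ | bQ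
  on_goal 2 => rcases bQ with _ | _ <;> exact hadjQ.elim
  have hσ₁S : σ₁.1 ∈ S := hadjP
  have hσ₂S : σ₂.1 ∈ S := hadjQ
  have hPrest : restP.IsPath ∧ Sum.inl σ₁ ∉ restP.support → True := fun _ => trivial
  have hP' : (Walk.cons hadjP restP).IsPath := hPe ▸ hP
  have hQ' : (Walk.cons hadjQ restQ).IsPath := hQe ▸ hQ
  rw [Walk.cons_isPath_iff] at hP' hQ'
  have hfP : Sum.inr false ∉ restP.support := hP'.2
  have hfQ : Sum.inr false ∉ restQ.support := hQ'.2
  obtain ⟨t₁, ht₁, q₁, hq₁, hmem₁⟩ := strip_aux restP hP'.1 hfP rfl σ₁ rfl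
  obtain ⟨t₂, ht₂, q₂, hq₂, hmem₂⟩ := strip_aux restQ hQ'.1 hfQ rfl σ₂ rfl
  refine ⟨σ₁.1, σ₂.1, t₁, t₂, q₁, q₂, hσ₁S, hσ₂S, ht₁, ht₂, hq₁, hq₂, ?_⟩
  intro v hv₁ hv₂
  obtain ⟨h₁, hin₁⟩ := hmem₁ v hv₁
  obtain ⟨h₂, hin₂⟩ := hmem₂ v hv₂
  have hvP : Sum.inl (⟨v, h₁⟩ : {v : V // v ∈ DSet Γ S T}) ∈ P.support := by
    rw [hPe, Walk.support_cons]; exact List.mem_cons_of_mem _ hin₁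
  have hvQ : Sum.inl (⟨v, h₁⟩ : {v : V // v ∈ DSet Γ S T}) ∈ Q.support := by
    rw [hQe, Walk.support_cons]
    refine List.mem_cons_of_mem _ ?_
    rwa [show (⟨v, h₁⟩ : {v : V // v ∈ DSet Γ S T}) = ⟨v, h₂⟩ from Subtype.ext rfl]
  rcases hshare _ hvP hvQ with h | h <;> simp at h

end Menger

section App
variable {V : Type} [Fintype V] {G : SimpleGraph V} {s₁ t₁ s₂ t₂ : V}

/-- Walks in an induced subgraph stay inside a "closed" subset. -/
lemma induce_closed_walk {P Kset : Set V}
    (hcl : ∀ a ∈ Kset, ∀ b, G.Adj a b → b ∈ P → b ∈ Kset) :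
    ∀ {x y : ↥P} (_ : (G.induce P).Walk x y), x.1 ∈ Kset → y.1 ∈ Kset := by
  intro x y w
  induction w with
  | nil => exact id
  | @cons a c d h rest ih =>
    intro hx
    have hGadj : G.Adj a.1 c.1 := h
    exact ih (hcl a.1 hx c.1 hGadj c.2)

/-- Convert a walk in an induced subgraph to a walk in another graph on `V`. -/
lemma induce_walk_exists {Kset : Set V} {Γ' : SimpleGraph V}
    (hadj : ∀ a b, a ∈ Kset → b ∈ Kset → G.Adj a b → Γ'.Adj a b) :
    ∀ {x y : ↥Kset} (_ : (G.induce Kset).Walk x y),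
      ∃ q : Γ'.Walk x.1 y.1, ∀ v ∈ q.support, v ∈ Kset := by
  intro x y w
  induction w with
  | nil => exact ⟨Walk.nil, by simp⟩
  | @cons a c d h rest ih =>
    obtain ⟨q, hq⟩ := ih
    refine ⟨Walk.cons (hadj a.1 c.1 a.2 c.2 h) q, ?_⟩
    intro v hv
    rw [Walk.support_cons, List.mem_cons] at hv
    rcases hv with rfl | hv
    · exact a.2
    · exact hq v hv

lemma subgraphOfAdj_symm' {u v : V} (h : G.Adj u v) :
    G.subgraphOfAdj h = G.subgraphOfAdj h.symm := by
  refine Subgraph.ext (Set.pair_comm u v) ?_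
  funext a b
  apply propext
  show s(u, v) = s(a, b) ↔ s(v, u) = s(a, b)
  constructor
  · intro hh; rw [← hh]; exact Sym2.eq_swap
  · intro hh; rw [← hh]; exact Sym2.eq_swap

variable (h₁ : G.Adj s₁ t₁) (h₂ : G.Adj s₂ t₂)

lemma Msub_verts : (Msub G h₁ h₂).verts = {s₁, t₁, s₂, t₂} := by
  ext v
  simp only [Msub, Subgraph.verts_sup, subgraphOfAdj_verts, Set.mem_union, Set.mem_insert_iff,
    Set.mem_singleton_iff]
  tauto

lemma Msub_edgeSet : (Msub G h₁ h₂).edgeSet = {s(s₁, t₁), s(s₂, t₂)} := by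
  rw [Msub, Subgraph.edgeSet_sup, edgeSet_subgraphOfAdj, edgeSet_subgraphOfAdj]
  exact Set.singleton_union

lemma Mverts_ncard (hnd : ([s₁, t₁, s₂, t₂] : List V).Nodup) : ((Msub G h₁ h₂).verts).ncard = 4 := by
  simp only [List.nodup_cons, List.mem_cons, List.mem_singleton, List.not_mem_nil,
    or_false, not_or, List.nodup_nil, and_true] at hnd
  rw [Msub_verts]
  rw [Set.ncard_insert_of_notMem (by simp [hnd.1.1, hnd.1.2.1, hnd.1.2.2]),
    Set.ncard_insert_of_notMem (by simp [hnd.2.1.1, hnd.2.1.2]),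
    Set.ncard_insert_of_notMem (by simp [hnd.2.2.1]), Set.ncard_singleton]

section Bridge
variable {K : Set V}

lemma bridge_verts : (bridgeSubgraph G K).verts = K ∪ {v | ∃ u ∈ K, G.Adj v u} := rfl

lemma bridge_adj {a b : V} : (bridgeSubgraph G K).Adj a b ↔ G.Adj a b ∧ (a ∈ K ∨ b ∈ K) :=
  Iff.rfl

lemma feet_char (hK : IsCompAway G (Msub G h₁ h₂).verts K) :
    bridgeFeet (Msub G h₁ h₂) (bridgeSubgraph G K) =
      {v | v ∈ (Msub G h₁ h₂).verts ∧ ∃ u ∈ K, G.Adj v u} := by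
  ext v
  simp only [bridgeFeet, bridge_verts, Set.mem_inter_iff, Set.mem_union, Set.mem_setOf_eq]
  constructor
  · rintro ⟨hv | hv, hM⟩
    · exact absurd hM (Set.disjoint_left.mp hK.1 hv)
    · exact ⟨hM, hv⟩
  · rintro ⟨hM, hv⟩
    exact ⟨Or.inr hv, hM⟩

lemma feet_sub : bridgeFeet (Msub G h₁ h₂) (bridgeSubgraph G K) ⊆ (Msub G h₁ h₂).verts :=
  Set.inter_subset_right

/-- Closure property used repeatedly: a `G`-neighbour of `K` avoiding the feet is in `K`. -/
lemma step_in_K (hK : IsCompAway G (Msub G h₁ h₂).verts K) {a b : V} (ha : a ∈ K) (hadj : G.Adj a b)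
    (hb : b ∉ bridgeFeet (Msub G h₁ h₂) (bridgeSubgraph G K)) : b ∈ K := by
  by_cases hbM : b ∈ (Msub G h₁ h₂).verts
  · exact absurd ((feet_char h₁ h₂ hK).symm ▸ ⟨hbM, a, ha, hadj.symm⟩) hb
  · exact hK.2.2 a ha b hadj hbM

/-- A nontrivial bridge has at least two feet. -/
lemma feet_ge_two (hnd : ([s₁, t₁, s₂, t₂] : List V).Nodup)
    (hK : IsCompAway G (Msub G h₁ h₂).verts K) (hconn : IsKConnected 2 G)
    (hle : (bridgeFeet (Msub G h₁ h₂) (bridgeSubgraph G K)).ncard ≤ 1) : False := by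
  classical
  set F := bridgeFeet (Msub G h₁ h₂) (bridgeSubgraph G K) with hF
  obtain ⟨⟨k₀, hk₀⟩⟩ := hK.2.1.nonempty
  have hM4 : ((Msub G h₁ h₂).verts).ncard = 4 := Mverts_ncard h₁ h₂ hnd
  have hm : ∃ m ∈ (Msub G h₁ h₂).verts, m ∉ F := by
    by_contra hcon
    push_neg at hcon
    have hsub : (Msub G h₁ h₂).verts ⊆ F := hcon
    have := Set.ncard_le_ncard hsub F.toFinite
    omega
  obtain ⟨m, hmM, hmF⟩ := hm
  have hcc := hconn.2 F (by omega)
  have hk₀c : k₀ ∈ Fᶜ := fun h => Set.disjoint_left.mp hK.1 hk₀ (feet_sub h₁ h₂ h)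
  have hmc : m ∈ Fᶜ := hmF
  obtain ⟨w⟩ := hcc.preconnected ⟨k₀, hk₀c⟩ ⟨m, hmc⟩
  have : m ∈ K := by
    refine induce_closed_walk ?_ w hk₀
    intro a ha b hadj hb
    exact step_in_K h₁ h₂ hK ha hadj hb
  exact Set.disjoint_left.mp hK.1 this hmM

/-- A nontrivial bridge with exactly two feet contradicts the 2-separation hypothesis. -/
lemma feet_ne_two (hnd : ([s₁, t₁, s₂, t₂] : List V).Nodup)
    (hK : IsCompAway G (Msub G h₁ h₂).verts K) (hsep2 : ∀ G₁ G₂ : G.Subgraph, IsKSeparation G G₁ G₂ 2 →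
      SeparatesEdgePair G₁ G₂ s(s₁, t₁) s(s₂, t₂))
    (heq : (bridgeFeet (Msub G h₁ h₂) (bridgeSubgraph G K)).ncard = 2) : False := by
  classical
  set F := bridgeFeet (Msub G h₁ h₂) (bridgeSubgraph G K) with hF
  obtain ⟨⟨k₀, hk₀⟩⟩ := hK.2.1.nonempty
  have hM4 : ((Msub G h₁ h₂).verts).ncard = 4 := Mverts_ncard h₁ h₂ hnd
  have hm : ∃ m ∈ (Msub G h₁ h₂).verts, m ∉ F := by
    by_contra hcon
    push_neg at hcon
    have := Set.ncard_le_ncard (show (Msub G h₁ h₂).verts ⊆ F from hcon) F.toFinite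
    omega
  obtain ⟨m, hmM, hmF⟩ := hm
  set G₁ : G.Subgraph :=
    { verts := Kᶜ
      Adj := fun a b => G.Adj a b ∧ a ∉ K ∧ b ∉ K
      adj_sub := fun h => h.1
      edge_vert := fun h => h.2.1
      symm := ⟨fun a b h => ⟨h.1.symm, h.2.2, h.2.1⟩⟩ } with hG₁
  have hs₁M : s₁ ∈ (Msub G h₁ h₂).verts := by rw [Msub_verts]; simp
  have ht₁M : t₁ ∈ (Msub G h₁ h₂).verts := by rw [Msub_verts]; simp
  have hs₂M : s₂ ∈ (Msub G h₁ h₂).verts := by rw [Msub_verts]; simp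
  have ht₂M : t₂ ∈ (Msub G h₁ h₂).verts := by rw [Msub_verts]; simp
  have hksep : IsKSeparation G G₁ (bridgeSubgraph G K) 2 := by
    refine ⟨⟨?_, ?_, ?_, ?_⟩, ?_⟩
    · -- sup = ⊤
      refine le_antisymm le_top ⟨?_, ?_⟩
      · intro v _
        rw [Subgraph.verts_sup]
        by_cases hv : v ∈ K
        · exact Or.inr (Or.inl hv)
        · exact Or.inl hv
      · intro a b hab
        rw [Subgraph.sup_adj]
        by_cases h : a ∈ K ∨ b ∈ K
        · exact Or.inr ⟨hab, h⟩
        · push_neg at h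
          exact Or.inl ⟨hab, h.1, h.2⟩
    · -- edge-disjoint
      rw [Set.disjoint_left]
      intro e he1 he2
      induction e with
      | _ a b =>
        rw [Subgraph.mem_edgeSet] at he1 he2
        rcases he2.2 with h | h
        · exact he1.2.1 h
        · exact he1.2.2 h
    · -- G₁ not spanning
      intro h
      have : k₀ ∈ Kᶜ := by rw [show G₁.verts = Kᶜ from rfl] at h; rw [h]; trivial
      exact this hk₀
    · -- G₂ not spanning
      intro h
      have hmB : m ∈ (bridgeSubgraph G K).verts := by rw [h]; trivial
      rcases (hmB : m ∈ K ∨ m ∈ {v | ∃ u ∈ K, G.Adj v u}) with hmB | hmB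
      · exact Set.disjoint_left.mp hK.1 hmB hmM
      · apply hmF
        rw [hF, feet_char h₁ h₂ hK]
        exact ⟨hmM, hmB⟩
    · -- the separator has exactly two vertices
      have : G₁.verts ∩ (bridgeSubgraph G K).verts = F := by
        ext v
        constructor
        · rintro ⟨hv1, hv2⟩
          rcases (hv2 : v ∈ K ∨ v ∈ {v | ∃ u ∈ K, G.Adj v u}) with hv2 | hv2
          · exact absurd hv2 hv1
          · obtain ⟨u, hu, hadj⟩ := hv2
            have hvM : v ∈ (Msub G h₁ h₂).verts := by
              by_contra hvM
              exact hv1 (hK.2.2 u hu v hadj.symm hvM)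
            rw [hF, feet_char h₁ h₂ hK]
            exact ⟨hvM, u, hu, hadj⟩
        · intro hv
          rw [hF, feet_char h₁ h₂ hK] at hv
          obtain ⟨hvM, u, hu, hadj⟩ := hv
          exact ⟨fun hvK => Set.disjoint_left.mp hK.1 hvK hvM, Or.inr ⟨u, hu, hadj⟩⟩
      rw [this]; exact heq
  have := hsep2 G₁ (bridgeSubgraph G K) hksep
  rcases this with ⟨-, he₂, -, -⟩ | ⟨-, he₁, -, -⟩
  · rw [Subgraph.mem_edgeSet] at he₂
    rcases he₂.2 with h | h
    · exact Set.disjoint_left.mp hK.1 h hs₂M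
    · exact Set.disjoint_left.mp hK.1 h ht₂M
  · rw [Subgraph.mem_edgeSet] at he₁
    rcases he₁.2 with h | h
    · exact Set.disjoint_left.mp hK.1 h hs₁M
    · exact Set.disjoint_left.mp hK.1 h ht₁M


lemma nodup_ne (hnd : ([s₁, t₁, s₂, t₂] : List V).Nodup) :
    s₁ ≠ t₁ ∧ s₁ ≠ s₂ ∧ s₁ ≠ t₂ ∧ t₁ ≠ s₂ ∧ t₁ ≠ t₂ ∧ s₂ ≠ t₂ := by
  simp only [List.nodup_cons, List.mem_cons, List.mem_singleton, List.not_mem_nil,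
    or_false, not_or, List.nodup_nil, and_true] at hnd
  tauto

lemma trivial_feet_le_two {B : G.Subgraph} (ht : IsTrivialBridgeOf (Msub G h₁ h₂) B) :
    (bridgeFeet (Msub G h₁ h₂) B).ncard ≤ 2 := by
  obtain ⟨u, v, h, hu, hv, hne, rfl⟩ := ht
  have hsub : bridgeFeet (Msub G h₁ h₂) (G.subgraphOfAdj h) ⊆ {u, v} := by
    intro x hx
    exact hx.1
  calc (bridgeFeet (Msub G h₁ h₂) (G.subgraphOfAdj h)).ncard
      ≤ ({u, v} : Set V).ncard := Set.ncard_le_ncard hsub (Set.toFinite _)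
    _ ≤ 2 := by
        have := Set.ncard_insert_le u ({v} : Set V)
        simpa [Set.ncard_singleton] using this

lemma part_i (hnd : ([s₁, t₁, s₂, t₂] : List V).Nodup)
    (hsep2 : ∀ G₁ G₂ : G.Subgraph, IsKSeparation G G₁ G₂ 2 →
      SeparatesEdgePair G₁ G₂ s(s₁, t₁) s(s₂, t₂))
    (B : G.Subgraph) (hbr : IsBridgeOf (Msub G h₁ h₂) B)
    (hc2 : (bridgeFeet (Msub G h₁ h₂) B).ncard = 2) :
    ∃ u v, ∃ h : G.Adj u v, u ∈ ({s₁, t₁} : Set V) ∧ v ∈ ({s₂, t₂} : Set V) ∧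
      B = G.subgraphOfAdj h := by
  rcases hbr with htr | ⟨K, hK, rfl⟩
  · obtain ⟨u, v, h, hu, hv, hne, rfl⟩ := htr
    rw [Msub_verts] at hu hv
    rw [Msub_edgeSet] at hne
    simp only [Set.mem_insert_iff, Set.mem_singleton_iff] at hu hv
    rcases hu with rfl | rfl | rfl | rfl <;> rcases hv with rfl | rfl | rfl | rfl <;>
      first
        | exact absurd rfl h.ne
        | (exfalso; apply hne; simp [Sym2.eq_iff]; done)
        | (refine ⟨_, _, h, ?_, ?_, rfl⟩ <;> (simp; done))
        | (refine ⟨_, _, h.symm, ?_, ?_, subgraphOfAdj_symm' h⟩ <;> (simp; done))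
  · exact absurd hc2 (fun hc => feet_ne_two h₁ h₂ hnd hK hsep2 hc)

lemma part_ii (hnd : ([s₁, t₁, s₂, t₂] : List V).Nodup)
    (B B₁ B₂ : G.Subgraph) (x : V) (hbr : IsBridgeOf (Msub G h₁ h₂) B)
    (h4 : (bridgeFeet (Msub G h₁ h₂) B).ncard = 4)
    (hsep : IsSubgraphSeparation B B₁ B₂ 1)
    (hss : SeparatesSets B₁ B₂ {s₁, t₁} {s₂, t₂})
    (hx : B₁.verts ∩ B₂.verts = {x}) :
    x ∉ (Msub G h₁ h₂).verts := by
  intro hxM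
  obtain ⟨hne12, -, -, -, -, hne2⟩ := nodup_ne hnd
  obtain ⟨hn1, hn2, hn3, hn4, hn5, hn6⟩ := nodup_ne hnd
  rcases hbr with htr | ⟨K, hK, rfl⟩
  · have := trivial_feet_le_two h₁ h₂ htr
    omega
  obtain ⟨hsup, hdisj, hnev₁, hnev₂, hcard⟩ := hsep
  have hxK : x ∉ K := fun h => Set.disjoint_left.mp hK.1 h hxM
  have hBverts : B₁.verts ∪ B₂.verts = (bridgeSubgraph G K).verts := by
    rw [← hsup, Subgraph.verts_sup]
  have hadj_or : ∀ a b, (bridgeSubgraph G K).Adj a b → B₁.Adj a b ∨ B₂.Adj a b := by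
    intro a b hab
    rw [← hsup] at hab
    exact hab
  have hs₁M : s₁ ∈ (Msub G h₁ h₂).verts := by rw [Msub_verts]; simp
  have ht₁M : t₁ ∈ (Msub G h₁ h₂).verts := by rw [Msub_verts]; simp
  have hs₂M : s₂ ∈ (Msub G h₁ h₂).verts := by rw [Msub_verts]; simp
  have ht₂M : t₂ ∈ (Msub G h₁ h₂).verts := by rw [Msub_verts]; simp
  -- every M-vertex of a part whose K-part is empty equals x
  have key : ∀ (C₁ C₂ : G.Subgraph), (∀ a b, (bridgeSubgraph G K).Adj a b →
        C₁.Adj a b ∨ C₂.Adj a b) → C₁.verts ∩ C₂.verts = {x} →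
      C₁.verts ∪ C₂.verts = (bridgeSubgraph G K).verts →
      (¬ (K ∩ C₂.verts).Nonempty) → ∀ f, f ∈ (Msub G h₁ h₂).verts → f ∈ C₂.verts → f = x := by
    intro C₁ C₂ hor hxeq hveq hemp f hfM hfB₂
    have hfB : f ∈ (bridgeSubgraph G K).verts := by rw [← hveq]; exact Or.inr hfB₂
    have hfN : ∃ u ∈ K, G.Adj f u := by
      rcases (hfB : f ∈ K ∨ f ∈ {v | ∃ u ∈ K, G.Adj v u}) with h | h
      · exact absurd hfM (Set.disjoint_left.mp hK.1 h)
      · exact h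
    obtain ⟨u, hu, hadj⟩ := hfN
    have hBadj : (bridgeSubgraph G K).Adj f u := ⟨hadj, Or.inr hu⟩
    rcases hor f u hBadj with hB₁ | hB₂
    · have hf₁ : f ∈ C₁.verts := C₁.edge_vert hB₁
      have : f ∈ C₁.verts ∩ C₂.verts := ⟨hf₁, hfB₂⟩
      rw [hxeq] at this
      exact this
    · exact absurd ⟨u, hu, C₂.edge_vert hB₂.symm⟩ hemp
  -- both parts meet K
  have hne₂K : (K ∩ B₂.verts).Nonempty := by
    by_contra hemp
    rcases hss with ⟨hS1, hS2, -, -⟩ | ⟨hS1, hS2, -, -⟩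
    · have e1 := key B₁ B₂ hadj_or hx hBverts hemp s₂ hs₂M (hS2 (by simp))
      have e2 := key B₁ B₂ hadj_or hx hBverts hemp t₂ ht₂M (hS2 (by simp))
      exact hn6 (e1.trans e2.symm)
    · have e1 := key B₁ B₂ hadj_or hx hBverts hemp s₁ hs₁M (hS2 (by simp))
      have e2 := key B₁ B₂ hadj_or hx hBverts hemp t₁ ht₁M (hS2 (by simp))
      exact hn1 (e1.trans e2.symm)
  have hne₁K : (K ∩ B₁.verts).Nonempty := by
    by_contra hemp
    have hor' : ∀ a b, (bridgeSubgraph G K).Adj a b → B₂.Adj a b ∨ B₁.Adj a b :=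
      fun a b hab => (hadj_or a b hab).symm
    have hx' : B₂.verts ∩ B₁.verts = {x} := by rw [Set.inter_comm]; exact hx
    have hv' : B₂.verts ∪ B₁.verts = (bridgeSubgraph G K).verts := by
      rw [Set.union_comm]; exact hBverts
    rcases hss with ⟨hS1, hS2, -, -⟩ | ⟨hS1, hS2, -, -⟩
    · have e1 := key B₂ B₁ hor' hx' hv' hemp s₁ hs₁M (hS1 (by simp))
      have e2 := key B₂ B₁ hor' hx' hv' hemp t₁ ht₁M (hS1 (by simp))
      exact hn1 (e1.trans e2.symm)
    · have e1 := key B₂ B₁ hor' hx' hv' hemp s₂ hs₂M (hS1 (by simp))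
      have e2 := key B₂ B₁ hor' hx' hv' hemp t₂ ht₂M (hS1 (by simp))
      exact hn6 (e1.trans e2.symm)
  -- K is connected, a contradiction
  obtain ⟨u₀, hu₀K, hu₀B⟩ := hne₁K
  obtain ⟨w₀, hw₀K, hw₀B⟩ := hne₂K
  obtain ⟨w⟩ := hK.2.1.preconnected ⟨u₀, hu₀K⟩ ⟨w₀, hw₀K⟩
  have hw₀K₁ : w₀ ∈ K ∩ B₁.verts := by
    refine induce_closed_walk ?_ w ⟨hu₀K, hu₀B⟩
    rintro a ⟨haK, haB₁⟩ b hadj hbK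
    have hBadj : (bridgeSubgraph G K).Adj a b := ⟨hadj, Or.inl haK⟩
    rcases hadj_or a b hBadj with hB₁ | hB₂
    · exact ⟨hbK, B₁.edge_vert hB₁.symm⟩
    · have haB₂ : a ∈ B₂.verts := B₂.edge_vert hB₂
      have : a ∈ B₁.verts ∩ B₂.verts := ⟨haB₁, haB₂⟩
      rw [hx] at this
      exact absurd (this ▸ haK) hxK
  have : w₀ ∈ B₁.verts ∩ B₂.verts := ⟨hw₀K₁.2, hw₀B⟩
  rw [hx] at this
  exact hxK (this ▸ hw₀K)

lemma pair_eq_pair {α : Type} {a b c d : α} (ha : a = c ∨ a = d) (hb : b = c ∨ b = d)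
    (hab : a ≠ b) : ({a, b} : Set α) = {c, d} := by
  rcases ha with rfl | rfl <;> rcases hb with rfl | rfl
  · exact absurd rfl hab
  · rfl
  · exact Set.pair_comm a b
  · exact absurd rfl hab

lemma spanning_edge {B : G.Subgraph} {e : Sym2 V} (he : e ∈ B.spanningCoe.edgeSet) :
    e ∈ B.edgeSet := by
  induction e with
  | _ a b =>
    rw [SimpleGraph.mem_edgeSet] at he
    rw [Subgraph.mem_edgeSet]
    exact he

lemma spanning_support_mem {u v : V} (p : (bridgeSubgraph G K).spanningCoe.Walk u v)
    (hu : u ∈ (bridgeSubgraph G K).verts) :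
    ∀ w ∈ p.support, w ∈ (bridgeSubgraph G K).verts := by
  induction p with
  | nil =>
    intro w hw
    simp only [Walk.support_nil, List.mem_singleton] at hw
    exact hw ▸ hu
  | @cons a c d h rest ih =>
    intro w hw
    rw [Walk.support_cons, List.mem_cons] at hw
    rcases hw with rfl | hw
    · exact hu
    · exact ih ((bridgeSubgraph G K).edge_vert (Subgraph.adj_symm _ h)) w hw

lemma spanning_to_PathIn {u v : V} (p : (bridgeSubgraph G K).spanningCoe.Walk u v)
    (hp : p.IsPath) (hu : u ∈ (bridgeSubgraph G K).verts) :
    ∃ q : G.Walk u v, PathIn (bridgeSubgraph G K) q ∧ q.support = p.support := by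
  obtain ⟨q, hs, he⟩ := walk_transfer (fun a b h => (bridgeSubgraph G K).adj_sub h) p
  refine ⟨q, ⟨?_, ?_, ?_⟩, hs⟩
  · rw [Walk.isPath_def, hs]
    exact hp.support_nodup
  · intro w hw
    exact spanning_support_mem p hu w (hs ▸ hw)
  · intro e hee
    exact spanning_edge (p.edges_subset_edgeSet (he ▸ hee))

lemma foot_path (hK : IsCompAway G (Msub G h₁ h₂).verts K) {m₁ m₂ : V}
    (hm₁ : m₁ ∈ bridgeFeet (Msub G h₁ h₂) (bridgeSubgraph G K))
    (hm₂ : m₂ ∈ bridgeFeet (Msub G h₁ h₂) (bridgeSubgraph G K)) :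
    ∃ p : (bridgeSubgraph G K).spanningCoe.Walk m₁ m₂, p.IsPath ∧
      ∀ v ∈ p.support, v ∈ K ∪ {m₁, m₂} := by
  classical
  rw [feet_char h₁ h₂ hK] at hm₁ hm₂
  obtain ⟨-, u₁, hu₁, ha₁⟩ := hm₁
  obtain ⟨-, u₂, hu₂, ha₂⟩ := hm₂
  obtain ⟨wk⟩ := hK.2.1.preconnected ⟨u₁, hu₁⟩ ⟨u₂, hu₂⟩
  obtain ⟨q, hq⟩ := induce_walk_exists
    (Γ' := (bridgeSubgraph G K).spanningCoe)
    (fun a b ha hb hadj => (⟨hadj, Or.inl ha⟩ : (bridgeSubgraph G K).Adj a b)) wk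
  have hadj₁ : (bridgeSubgraph G K).spanningCoe.Adj m₁ u₁ := ⟨ha₁, Or.inr hu₁⟩
  have hadj₂ : (bridgeSubgraph G K).spanningCoe.Adj u₂ m₂ := ⟨ha₂.symm, Or.inl hu₂⟩
  set full := Walk.cons hadj₁ (q.concat hadj₂) with hfull
  refine ⟨full.toPath, full.toPath.isPath, ?_⟩
  intro v hv
  have hv' : v ∈ full.support := full.support_toPath_subset hv
  rw [hfull, Walk.support_cons, List.mem_cons] at hv'
  rcases hv' with rfl | hv'
  · exact Or.inr (by simp)
  · rcases (mem_support_concat q hadj₂ v).mp hv' with h | rfl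
    · exact Or.inl (hq v h)
    · exact Or.inr (by simp)

lemma feet_eq_Mverts (hnd : ([s₁, t₁, s₂, t₂] : List V).Nodup)
    (h4 : (bridgeFeet (Msub G h₁ h₂) (bridgeSubgraph G K)).ncard = 4) :
    bridgeFeet (Msub G h₁ h₂) (bridgeSubgraph G K) = (Msub G h₁ h₂).verts := by
  refine Set.eq_of_subset_of_ncard_le (feet_sub h₁ h₂) ?_ (Set.toFinite _)
  rw [Mverts_ncard h₁ h₂ hnd, h4]

lemma menger_hyp (hnd : ([s₁, t₁, s₂, t₂] : List V).Nodup)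
    (hK : IsCompAway G (Msub G h₁ h₂).verts K)
    (h4 : (bridgeFeet (Msub G h₁ h₂) (bridgeSubgraph G K)).ncard = 4)
    (hns : ¬ ∃ (B₁ B₂ : G.Subgraph) (x : V),
      IsSubgraphSeparation (bridgeSubgraph G K) B₁ B₂ 1 ∧ B₁.verts ∩ B₂.verts = {x} ∧
      x ∉ (Msub G h₁ h₂).verts ∧ s₁ ∈ B₁.verts ∧ t₁ ∈ B₁.verts ∧
      s₂ ∈ B₂.verts ∧ t₂ ∈ B₂.verts) :
    ∀ x : V, ∃ s ∈ ({s₁, t₁} : Set V), ∃ t ∈ ({s₂, t₂} : Set V),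
      ∃ p : (bridgeSubgraph G K).spanningCoe.Walk s t, p.IsPath ∧ x ∉ p.support := by
  classical
  intro x
  obtain ⟨hn1, hn2, hn3, hn4, hn5, hn6⟩ := nodup_ne hnd
  have hfeet := feet_eq_Mverts h₁ h₂ hnd h4
  have hsf : s₁ ∈ bridgeFeet (Msub G h₁ h₂) (bridgeSubgraph G K) := by
    rw [hfeet, Msub_verts]; simp
  have htf : t₁ ∈ bridgeFeet (Msub G h₁ h₂) (bridgeSubgraph G K) := by
    rw [hfeet, Msub_verts]; simp
  have hsf₂ : s₂ ∈ bridgeFeet (Msub G h₁ h₂) (bridgeSubgraph G K) := by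
    rw [hfeet, Msub_verts]; simp
  have htf₂ : t₂ ∈ bridgeFeet (Msub G h₁ h₂) (bridgeSubgraph G K) := by
    rw [hfeet, Msub_verts]; simp
  by_cases hxK : x ∈ K
  · -- x is a component vertex; if it hits all paths we get a forbidden 1-separation
    by_contra hno
    push_neg at hno
    have hxM : x ∉ (Msub G h₁ h₂).verts := fun h => Set.disjoint_left.mp hK.1 hxK h
    have hxB : x ∈ (bridgeSubgraph G K).verts := Or.inl hxK
    set R : Set V := {v | ∃ s ∈ ({s₁, t₁} : Set V),
      ∃ p : (bridgeSubgraph G K).spanningCoe.Walk s v, x ∉ p.support} with hR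
    have hxR : x ∉ R := fun ⟨s, hs, p, hav⟩ => hav p.end_mem_support
    have hxns₁ : x ≠ s₁ := by rintro rfl; exact hxM (by rw [Msub_verts]; simp)
    have hxnt₁ : x ≠ t₁ := by rintro rfl; exact hxM (by rw [Msub_verts]; simp)
    have hs₁R : s₁ ∈ R := ⟨s₁, by simp, Walk.nil, by simp [Ne.symm hxns₁, hxns₁]⟩
    have ht₁R : t₁ ∈ R := ⟨t₁, by simp, Walk.nil, by simp [Ne.symm hxnt₁, hxnt₁]⟩
    have hTnR : ∀ t ∈ ({s₂, t₂} : Set V), t ∉ R := by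
      rintro t ht ⟨s, hs, p, hav⟩
      have := hno s hs t ht p.toPath p.toPath.isPath
      exact hav (p.support_toPath_subset this)
    have hs₂R : s₂ ∉ R := hTnR s₂ (by simp)
    have ht₂R : t₂ ∉ R := hTnR t₂ (by simp)
    have hRB : R ⊆ (bridgeSubgraph G K).verts := by
      rintro v ⟨s, hs, p, -⟩
      have hsB : s ∈ (bridgeSubgraph G K).verts := by
        rcases hs with rfl | rfl
        · exact hsf.1
        · exact htf.1
      exact spanning_support_mem p hsB v p.end_mem_support
    have hext : ∀ a b, (bridgeSubgraph G K).Adj a b → a ∈ R → b ≠ x → b ∈ R := by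
      rintro a b hab ⟨s, hs, p, hav⟩ hbx
      refine ⟨s, hs, p.concat hab, ?_⟩
      intro hmem
      rcases (mem_support_concat p hab x).mp hmem with h | h
      · exact hav h
      · exact hbx h.symm
    set B₁ : G.Subgraph :=
      { verts := R ∪ {x}
        Adj := fun a b => (bridgeSubgraph G K).Adj a b ∧ (a ∈ R ∨ b ∈ R)
        adj_sub := fun h => (bridgeSubgraph G K).adj_sub h.1
        edge_vert := by
          rintro a b ⟨hab, ha | hb⟩
          · exact Or.inl ha
          · by_cases hax : a = x
            · exact Or.inr hax
            · exact Or.inl (hext b a hab.symm hb hax)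
        symm := ⟨fun a b h => ⟨h.1.symm, h.2.symm⟩⟩ } with hB₁
    set B₂ : G.Subgraph :=
      { verts := (bridgeSubgraph G K).verts \ R
        Adj := fun a b => (bridgeSubgraph G K).Adj a b ∧ a ∉ R ∧ b ∉ R
        adj_sub := fun h => (bridgeSubgraph G K).adj_sub h.1
        edge_vert := fun h => ⟨(bridgeSubgraph G K).edge_vert h.1, h.2.1⟩
        symm := ⟨fun a b h => ⟨h.1.symm, h.2.2, h.2.1⟩⟩ } with hB₂
    apply hns
    refine ⟨B₁, B₂, x, ⟨?_, ?_, ?_, ?_, ?_⟩, ?_, hxM, Or.inl hs₁R, Or.inl ht₁R,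
      ⟨hsf₂.1, hs₂R⟩, ⟨htf₂.1, ht₂R⟩⟩
    · -- sup
      refine le_antisymm (sup_le ⟨?_, fun a b h => h.1⟩ ⟨?_, fun a b h => h.1⟩) ⟨?_, ?_⟩
      · rintro v (hv | rfl)
        · exact hRB hv
        · exact hxB
      · exact fun v hv => hv.1
      · intro v hv
        rw [Subgraph.verts_sup]
        by_cases hvR : v ∈ R
        · exact Or.inl (Or.inl hvR)
        · exact Or.inr ⟨hv, hvR⟩
      · intro a b hab
        rw [Subgraph.sup_adj]
        by_cases h : a ∈ R ∨ b ∈ R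
        · exact Or.inl ⟨hab, h⟩
        · push_neg at h
          exact Or.inr ⟨hab, h.1, h.2⟩
    · -- edge-disjoint
      rw [Set.disjoint_left]
      intro e he1 he2
      induction e with
      | _ a b =>
        rw [Subgraph.mem_edgeSet] at he1 he2
        rcases he1.2 with h | h
        · exact he2.2.1 h
        · exact he2.2.2 h
    · -- B₁ not all of B
      intro hcon
      have : s₂ ∈ B₁.verts := by rw [hcon]; exact hsf₂.1
      rcases this with h | h
      · exact hs₂R h
      · exact Set.disjoint_left.mp hK.1 (h ▸ hxK) (by rw [Msub_verts]; simp)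
    · -- B₂ not all of B
      intro hcon
      have : s₁ ∈ B₂.verts := by rw [hcon]; exact hsf.1
      exact this.2 hs₁R
    · -- separator has one vertex
      have : B₁.verts ∩ B₂.verts = {x} := by
        ext v
        constructor
        · rintro ⟨hv1 | rfl, hv2⟩
          · exact absurd hv1 hv2.2
          · rfl
        · rintro rfl
          exact ⟨Or.inr rfl, hxB, hxR⟩
      rw [this, Set.ncard_singleton]
    · -- the separator set
      ext v
      constructor
      · rintro ⟨hv1 | rfl, hv2⟩
        · exact absurd hv1 hv2.2
        · rfl
      · rintro rfl
        exact ⟨Or.inr rfl, hxB, hxR⟩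
  · -- x outside the component: route around it
    have pick₁ : ∃ m₁ ∈ ({s₁, t₁} : Set V), m₁ ≠ x := by
      by_cases h : x = s₁
      · exact ⟨t₁, by simp, fun hc => hn1 ((h ▸ hc : t₁ = s₁)).symm⟩
      · exact ⟨s₁, by simp, fun hc => h hc.symm⟩
    have pick₂ : ∃ m₂ ∈ ({s₂, t₂} : Set V), m₂ ≠ x := by
      by_cases h : x = s₂
      · exact ⟨t₂, by simp, fun hc => hn6 ((h ▸ hc : t₂ = s₂)).symm⟩
      · exact ⟨s₂, by simp, fun hc => h hc.symm⟩
    obtain ⟨m₁, hm₁, hm₁x⟩ := pick₁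
    obtain ⟨m₂, hm₂, hm₂x⟩ := pick₂
    have hm₁f : m₁ ∈ bridgeFeet (Msub G h₁ h₂) (bridgeSubgraph G K) := by
      rcases hm₁ with rfl | rfl
      · exact hsf
      · exact htf
    have hm₂f : m₂ ∈ bridgeFeet (Msub G h₁ h₂) (bridgeSubgraph G K) := by
      rcases hm₂ with rfl | rfl
      · exact hsf₂
      · exact htf₂
    obtain ⟨p, hp, hsupp⟩ := foot_path h₁ h₂ hK hm₁f hm₂f
    refine ⟨m₁, hm₁, m₂, hm₂, p, hp, ?_⟩
    intro hmem
    rcases hsupp x hmem with h | h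
    · exact hxK h
    · rcases h with rfl | rfl
      · exact hm₁x rfl
      · exact hm₂x rfl

lemma part_iii (hnd : ([s₁, t₁, s₂, t₂] : List V).Nodup) (hconn : IsKConnected 2 G)
    (hsep2 : ∀ G₁ G₂ : G.Subgraph, IsKSeparation G G₁ G₂ 2 →
      SeparatesEdgePair G₁ G₂ s(s₁, t₁) s(s₂, t₂))
    (hK : IsCompAway G (Msub G h₁ h₂).verts K)
    (hn3 : (bridgeFeet (Msub G h₁ h₂) (bridgeSubgraph G K)).ncard ≠ 3)
    (hns : ¬ ∃ (B₁ B₂ : G.Subgraph) (x : V),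
      IsSubgraphSeparation (bridgeSubgraph G K) B₁ B₂ 1 ∧ B₁.verts ∩ B₂.verts = {x} ∧
      x ∉ (Msub G h₁ h₂).verts ∧ s₁ ∈ B₁.verts ∧ t₁ ∈ B₁.verts ∧
      s₂ ∈ B₂.verts ∧ t₂ ∈ B₂.verts) :
    (bridgeFeet (Msub G h₁ h₂) (bridgeSubgraph G K)).ncard = 4 ∧
      TwoDisjointPathsIn (bridgeSubgraph G K) s₁ t₁ s₂ t₂ := by
  obtain ⟨hn1, hn2, hn3', hn4, hn5, hn6⟩ := nodup_ne hnd
  have h4 : (bridgeFeet (Msub G h₁ h₂) (bridgeSubgraph G K)).ncard = 4 := by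
    have hle : (bridgeFeet (Msub G h₁ h₂) (bridgeSubgraph G K)).ncard ≤ 4 := by
      have := Set.ncard_le_ncard (feet_sub h₁ h₂ (K := K)) (Set.toFinite _)
      rwa [Mverts_ncard h₁ h₂ hnd] at this
    have hg2 : ¬ (bridgeFeet (Msub G h₁ h₂) (bridgeSubgraph G K)).ncard ≤ 1 :=
      fun h => feet_ge_two h₁ h₂ hnd hK hconn h
    have hne2 : (bridgeFeet (Msub G h₁ h₂) (bridgeSubgraph G K)).ncard ≠ 2 :=
      fun h => feet_ne_two h₁ h₂ hnd hK hsep2 h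
    omega
  refine ⟨h4, ?_⟩
  have : Nonempty V := ⟨s₁⟩
  obtain ⟨a₁, a₂, b₁, b₂, q₁, q₂, ha₁, ha₂, hb₁, hb₂, hq₁, hq₂, hdisj⟩ :=
    menger2 (bridgeSubgraph G K).spanningCoe {s₁, t₁} {s₂, t₂}
      (menger_hyp h₁ h₂ hnd hK h4 hns)
  have hfeet := feet_eq_Mverts h₁ h₂ hnd h4
  have ha₁B : a₁ ∈ (bridgeSubgraph G K).verts := by
    rcases (ha₁ : a₁ = s₁ ∨ a₁ = t₁) with rfl | rfl
    · exact (by rw [hfeet, Msub_verts]; simp :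
        a₁ ∈ bridgeFeet (Msub G h₁ h₂) (bridgeSubgraph G K)).1
    · exact (by rw [hfeet, Msub_verts]; simp :
        a₁ ∈ bridgeFeet (Msub G h₁ h₂) (bridgeSubgraph G K)).1
  have ha₂B : a₂ ∈ (bridgeSubgraph G K).verts := by
    rcases (ha₂ : a₂ = s₁ ∨ a₂ = t₁) with rfl | rfl
    · exact (by rw [hfeet, Msub_verts]; simp :
        a₂ ∈ bridgeFeet (Msub G h₁ h₂) (bridgeSubgraph G K)).1
    · exact (by rw [hfeet, Msub_verts]; simp :
        a₂ ∈ bridgeFeet (Msub G h₁ h₂) (bridgeSubgraph G K)).1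
  obtain ⟨Q₁, hQ₁, hQ₁s⟩ := spanning_to_PathIn q₁ hq₁ ha₁B
  obtain ⟨Q₂, hQ₂, hQ₂s⟩ := spanning_to_PathIn q₂ hq₂ ha₂B
  have hane : a₁ ≠ a₂ := by
    intro h
    exact hdisj a₁ q₁.start_mem_support (h ▸ q₂.start_mem_support)
  have hbne : b₁ ≠ b₂ := by
    intro h
    exact hdisj b₁ q₁.end_mem_support (h ▸ q₂.end_mem_support)
  refine ⟨a₁, b₁, a₂, b₂, Q₁, Q₂, pair_eq_pair ha₁ ha₂ hane, pair_eq_pair hb₁ hb₂ hbne,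
    hQ₁, hQ₂, ?_⟩
  intro v hv₁ hv₂
  exact hdisj v (hQ₁s ▸ hv₁) (hQ₂s ▸ hv₂)

lemma part_iv (hnd : ([s₁, t₁, s₂, t₂] : List V).Nodup)
    (B : G.Subgraph) (hbr : IsBridgeOf (Msub G h₁ h₂) B)
    (h4 : (bridgeFeet (Msub G h₁ h₂) B).ncard = 4)
    (htd : TwoDisjointPathsIn B s₁ t₁ s₂ t₂) :
    ∃ (a₁ b₁ a₂ b₂ : V) (p₁ : G.Walk a₁ b₁) (p₂ : G.Walk a₂ b₂),
      ({a₁, a₂} : Set V) = {s₁, t₁} ∧ ({b₁, b₂} : Set V) = {s₂, t₂} ∧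
      PathIn B p₁ ∧ PathIn B p₂ ∧ (∀ v ∈ p₁.support, v ∉ p₂.support) ∧
      ∃ (u u' : V) (r : G.Walk u u'), u ∈ p₁.support ∧ u ≠ a₁ ∧ u ≠ b₁ ∧
        u' ∈ p₂.support ∧ u' ≠ a₂ ∧ u' ≠ b₂ ∧ PathIn B r := by
  classical
  obtain ⟨hn1, hn2, hn3, hn4, hn5, hn6⟩ := nodup_ne hnd
  rcases hbr with htr | ⟨K, hK, rfl⟩
  · have := trivial_feet_le_two h₁ h₂ htr
    omega
  obtain ⟨a₁, b₁, a₂, b₂, p₁, p₂, hpair₁, hpair₂, hPI₁, hPI₂, hdisj⟩ := htd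
  have ha₁ : a₁ = s₁ ∨ a₁ = t₁ := by
    have : a₁ ∈ ({s₁, t₁} : Set V) := hpair₁ ▸ (by simp : a₁ ∈ ({a₁, a₂} : Set V))
    exact this
  have hb₁ : b₁ = s₂ ∨ b₁ = t₂ := by
    have : b₁ ∈ ({s₂, t₂} : Set V) := hpair₂ ▸ (by simp : b₁ ∈ ({b₁, b₂} : Set V))
    exact this
  have ha₂ : a₂ = s₁ ∨ a₂ = t₁ := by
    have : a₂ ∈ ({s₁, t₁} : Set V) := hpair₁ ▸ (by simp : a₂ ∈ ({a₁, a₂} : Set V))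
    exact this
  have hb₂ : b₂ = s₂ ∨ b₂ = t₂ := by
    have : b₂ ∈ ({s₂, t₂} : Set V) := hpair₂ ▸ (by simp : b₂ ∈ ({b₁, b₂} : Set V))
    exact this
  have ha₁M : a₁ ∈ (Msub G h₁ h₂).verts := by
    rw [Msub_verts]; rcases ha₁ with rfl | rfl <;> simp
  have hb₁M : b₁ ∈ (Msub G h₁ h₂).verts := by
    rw [Msub_verts]; rcases hb₁ with rfl | rfl <;> simp
  have ha₂M : a₂ ∈ (Msub G h₁ h₂).verts := by
    rw [Msub_verts]; rcases ha₂ with rfl | rfl <;> simp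
  have hb₂M : b₂ ∈ (Msub G h₁ h₂).verts := by
    rw [Msub_verts]; rcases hb₂ with rfl | rfl <;> simp
  have hab₁ : a₁ ≠ b₁ := by
    rcases ha₁ with rfl | rfl <;> rcases hb₁ with rfl | rfl <;> assumption
  have hab₂ : a₂ ≠ b₂ := by
    rcases ha₂ with rfl | rfl <;> rcases hb₂ with rfl | rfl <;> assumption
  -- second vertex of p₁
  obtain ⟨c₁, hadj₁, rest₁, hp₁e⟩ := cons_decomp p₁ hab₁
  obtain ⟨c₂, hadj₂, rest₂, hp₂e⟩ := cons_decomp p₂ hab₂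
  have hc₁K : c₁ ∈ K := by
    have hedge : s(a₁, c₁) ∈ p₁.edges := by rw [hp₁e]; simp
    have := hPI₁.2.2 _ hedge
    rw [Subgraph.mem_edgeSet] at this
    rcases this.2 with h | h
    · exact absurd ha₁M (Set.disjoint_left.mp hK.1 h)
    · exact h
  have hc₂K : c₂ ∈ K := by
    have hedge : s(a₂, c₂) ∈ p₂.edges := by rw [hp₂e]; simp
    have := hPI₂.2.2 _ hedge
    rw [Subgraph.mem_edgeSet] at this
    rcases this.2 with h | h
    · exact absurd ha₂M (Set.disjoint_left.mp hK.1 h)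
    · exact h
  obtain ⟨wk⟩ := hK.2.1.preconnected ⟨c₁, hc₁K⟩ ⟨c₂, hc₂K⟩
  obtain ⟨q, hq⟩ := induce_walk_exists
    (Γ' := (bridgeSubgraph G K).spanningCoe)
    (fun a b ha hb hadj => (⟨hadj, Or.inl ha⟩ : (bridgeSubgraph G K).Adj a b)) wk
  obtain ⟨r, hrPI, hrs⟩ := spanning_to_PathIn q.toPath.1 q.toPath.isPath (Or.inl hc₁K)
  refine ⟨a₁, b₁, a₂, b₂, p₁, p₂, hpair₁, hpair₂, hPI₁, hPI₂, hdisj,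
    c₁, c₂, r, ?_, ?_, ?_, ?_, ?_, ?_, hrPI⟩
  · rw [hp₁e]; simp
  · exact fun h => Set.disjoint_left.mp hK.1 (h ▸ hc₁K) ha₁M
  · exact fun h => Set.disjoint_left.mp hK.1 (h ▸ hc₁K) hb₁M
  · rw [hp₂e]; simp
  · exact fun h => Set.disjoint_left.mp hK.1 (h ▸ hc₂K) ha₂M
  · exact fun h => Set.disjoint_left.mp hK.1 (h ▸ hc₂K) hb₂M

end Bridge
end App
end MCE

/-- Properties of the `M`-bridges of a minimum counterexample. -/
theorem bridges_of_minimum_counterexample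
    {V : Type} [Fintype V] (G : SimpleGraph V) (s₁ t₁ s₂ t₂ : V)
    (h₁ : G.Adj s₁ t₁) (h₂ : G.Adj s₂ t₂)
    (hmin : IsMinCounterexample G s₁ t₁ s₂ t₂) :
    -- (i) every M-bridge with exactly two feet is a single edge between {s₁,t₁} and {s₂,t₂}
    (∀ B : G.Subgraph, IsBridgeOf (Msub G h₁ h₂) B →
      (bridgeFeet (Msub G h₁ h₂) B).ncard = 2 →
      ∃ u v, ∃ h : G.Adj u v, u ∈ ({s₁, t₁} : Set V) ∧ v ∈ ({s₂, t₂} : Set V) ∧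
        B = G.subgraphOfAdj h) ∧
    -- (ii) for every M-bridge with four feet and a 1-separation separating {s₁,t₁} from
    -- {s₂,t₂} with cut vertex x, the vertex x is not in V(M)
    (∀ B B₁ B₂ : G.Subgraph, ∀ x : V, IsBridgeOf (Msub G h₁ h₂) B →
      (bridgeFeet (Msub G h₁ h₂) B).ncard = 4 →
      IsSubgraphSeparation B B₁ B₂ 1 → SeparatesSets B₁ B₂ {s₁, t₁} {s₂, t₂} →
      B₁.verts ∩ B₂.verts = {x} → x ∉ (Msub G h₁ h₂).verts) ∧
    -- (iii) the family 𝓑₄ᵦ is nonempty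
    (∃ B : G.Subgraph, IsBridgeOf (Msub G h₁ h₂) B ∧
      (bridgeFeet (Msub G h₁ h₂) B).ncard = 4 ∧ TwoDisjointPathsIn B s₁ t₁ s₂ t₂) ∧
    -- (iv) every member of 𝓑₄ᵦ contains two vertex-disjoint paths Q₁, Q₂ between {s₁,t₁}
    -- and {s₂,t₂} and a path R between internal vertices of Q₁ and Q₂
    (∀ B : G.Subgraph, IsBridgeOf (Msub G h₁ h₂) B →
      (bridgeFeet (Msub G h₁ h₂) B).ncard = 4 → TwoDisjointPathsIn B s₁ t₁ s₂ t₂ →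
      ∃ (a₁ b₁ a₂ b₂ : V) (p₁ : G.Walk a₁ b₁) (p₂ : G.Walk a₂ b₂),
        ({a₁, a₂} : Set V) = {s₁, t₁} ∧ ({b₁, b₂} : Set V) = {s₂, t₂} ∧
        PathIn B p₁ ∧ PathIn B p₂ ∧ (∀ v ∈ p₁.support, v ∉ p₂.support) ∧
        ∃ (u u' : V) (r : G.Walk u u'), u ∈ p₁.support ∧ u ≠ a₁ ∧ u ≠ b₁ ∧
          u' ∈ p₂.support ∧ u' ≠ a₂ ∧ u' ≠ b₂ ∧ PathIn B r) := by
  classical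
  obtain ⟨⟨h₁', h₂', hnd, hconn, hsep2, -, hnotsat⟩, -⟩ := hmin
  have hSIV : ¬ StructureIV G s₁ t₁ s₂ t₂ (Msub G h₁ h₂) := by
    intro hIV
    exact hnotsat (Or.inr (Or.inr (Or.inr (Or.inr hIV))))
  obtain ⟨B₀, hB₀⟩ := not_forall.mp hSIV
  obtain ⟨hbr₀, hcon⟩ := _root_.not_imp.mp hB₀
  have hnt₀ : ¬ IsTrivialBridgeOf (Msub G h₁ h₂) B₀ := fun h => hcon (Or.inl h)
  have hn3₀ : (bridgeFeet (Msub G h₁ h₂) B₀).ncard ≠ 3 := fun h => hcon (Or.inr (Or.inl h))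
  have hns₀ := fun h => hcon (Or.inr (Or.inr h))
  refine ⟨?_, ?_, ?_, ?_⟩
  · intro B hbr hc2
    exact MCE.part_i h₁ h₂ hnd hsep2 B hbr hc2
  · intro B B₁ B₂ x hbr h4 hsep hss hx
    exact MCE.part_ii h₁ h₂ hnd B B₁ B₂ x hbr h4 hsep hss hx
  · rcases hbr₀ with htr | ⟨K, hK, rfl⟩
    · exact absurd htr hnt₀
    · obtain ⟨h4, htd⟩ := MCE.part_iii h₁ h₂ hnd hconn hsep2 hK hn3₀ hns₀
      exact ⟨bridgeSubgraph G K, Or.inr ⟨K, hK, rfl⟩, h4, htd⟩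
  · intro B hbr h4 htd
    exact MCE.part_iv h₁ h₂ hnd B hbr h4 htd
end

section
/- Let G=(V,E) be a graph with two sources s1,s2 and two sinks t1,t2, and let c:E→ℤ₊ be a capacity function. Then the minimum capacity of an (s1,t1;s2,t2)-bicut equals the minimum of the minimum capacity of an ({s1,s2},{t1,t2})-cut and the minimum capacity of an ({s1,t2},{t1,s2})-cut. -/
open SimpleGraph

section HuAux

variable {V : Type} {G : SimpleGraph V} {K : Set (Sym2 V)}

/-- If every path between `u` and `v` meets `K`, then `u,v` are not reachable in
`G.deleteEdges K`. -/
private lemma not_reachable_of_cut_all {u v : V}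
    (h : ∀ p : G.Walk u v, p.IsPath → ∃ e ∈ p.edges, e ∈ K) :
    ¬ (G.deleteEdges K).Reachable u v := by
  classical
  rintro ⟨p⟩
  have hsub : ∀ e ∈ p.edges, e ∈ G.edgeSet := fun e he =>
    ((G.edgeSet_deleteEdges K ▸ p.edges_subset_edgeSet he : e ∈ G.edgeSet \ K)).1
  have hK : ∀ e ∈ p.edges, e ∉ K := by
    intro e he
    have := p.edges_subset_edgeSet he
    rw [SimpleGraph.edgeSet_deleteEdges] at this
    exact this.2
  set q : G.Walk u v := p.transfer G hsub with hq
  have hqe : q.edges = p.edges := p.edges_transfer hsub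
  obtain ⟨e, he, heK⟩ := h q.bypass q.bypass_isPath
  exact hK e (hqe ▸ q.edges_bypass_subset he) heK

/-- If `u,v` are not reachable in `G.deleteEdges K`, every path between them meets `K`. -/
private lemma cut_all_of_not_reachable {u v : V}
    (h : ¬ (G.deleteEdges K).Reachable u v) :
    ∀ p : G.Walk u v, p.IsPath → ∃ e ∈ p.edges, e ∈ K := by
  classical
  intro p _
  by_contra hc
  push_neg at hc
  exact h ⟨p.toDeleteEdges K hc⟩

end HuAux

/-- Hu. The minimum capacity of an `(s₁,t₁;s₂,t₂)`-bicut equals the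
minimum of the minimum capacities of an `({s₁,s₂},{t₁,t₂})`-cut and an
`({s₁,t₂},{t₁,s₂})`-cut. -/
theorem min_bicut_eq_min_of_cuts
    {V : Type} [Fintype V] (G : SimpleGraph V) (s₁ t₁ s₂ t₂ : V)
    (hd : ([s₁, t₁, s₂, t₂] : List V).Nodup) (c : Sym2 V → ℕ)
    (a b₁ b₂ : ℕ)
    (ha : IsLeast {n | ∃ K, IsBicut G s₁ t₁ s₂ t₂ K ∧ cutCap c K = n} a)
    (hb₁ : IsLeast {n | ∃ K, IsSTCut G {s₁, s₂} {t₁, t₂} K ∧ cutCap c K = n} b₁)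
    (hb₂ : IsLeast {n | ∃ K, IsSTCut G {s₁, t₂} {t₁, s₂} K ∧ cutCap c K = n} b₂) :
    a = min b₁ b₂ := by
  -- a ≤ b₁
  obtain ⟨K₁, hK₁, hcap₁⟩ := hb₁.1
  have hab₁ : a ≤ b₁ := ha.2 ⟨K₁, ⟨hK₁.1,
    fun p hp => hK₁.2 s₁ t₁ (Or.inl rfl) (Or.inl rfl) p hp,
    fun p hp => hK₁.2 s₂ t₂ (Or.inr rfl) (Or.inr rfl) p hp⟩, hcap₁⟩
  -- a ≤ b₂
  obtain ⟨K₂, hK₂, hcap₂⟩ := hb₂.1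
  have hab₂ : a ≤ b₂ := ha.2 ⟨K₂, ⟨hK₂.1,
    fun p hp => hK₂.2 s₁ t₁ (Or.inl rfl) (Or.inl rfl) p hp,
    fun p hp => by
      obtain ⟨e, he, heK⟩ := hK₂.2 t₂ s₂ (Or.inr rfl) (Or.inr rfl) p.reverse hp.reverse
      exact ⟨e, by simpa using he, heK⟩⟩, hcap₂⟩
  -- min b₁ b₂ ≤ a : the minimum bicut is itself a cut of one of the two kinds
  obtain ⟨K, hK, hcap⟩ := ha.1
  set R := fun u v => (G.deleteEdges K).Reachable u v with hR
  have hR11 : ¬ R s₁ t₁ := not_reachable_of_cut_all hK.2.1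
  have hR22 : ¬ R s₂ t₂ := not_reachable_of_cut_all hK.2.2
  have key : min b₁ b₂ ≤ a := by
    by_cases h1 : R s₁ t₂
    · -- K is an ({s₁,t₂},{t₁,s₂})-cut
      refine le_trans (min_le_right b₁ b₂) (hb₂.2 ⟨K, ⟨hK.1, ?_⟩, hcap⟩)
      intro u v hu hv p hp
      revert p hp
      simp only [Set.mem_insert_iff, Set.mem_singleton_iff] at hu hv
      rcases hu with rfl | rfl <;> rcases hv with rfl | rfl
      · exact cut_all_of_not_reachable hR11
      · exact cut_all_of_not_reachable (fun h => hR22 ((h1.symm.trans h).symm))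
      · exact cut_all_of_not_reachable (fun h => hR11 (h1.trans h))
      · exact cut_all_of_not_reachable (fun h => hR22 h.symm)
    · by_cases h2 : R s₂ t₁
      · -- K is again an ({s₁,t₂},{t₁,s₂})-cut
        refine le_trans (min_le_right b₁ b₂) (hb₂.2 ⟨K, ⟨hK.1, ?_⟩, hcap⟩)
        intro u v hu hv p hp
        revert p hp
        simp only [Set.mem_insert_iff, Set.mem_singleton_iff] at hu hv
        rcases hu with rfl | rfl <;> rcases hv with rfl | rfl
        · exact cut_all_of_not_reachable hR11
        · exact cut_all_of_not_reachable (fun h => hR11 (h.trans h2))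
        · exact cut_all_of_not_reachable (fun h => hR22 (h2.trans h.symm))
        · exact cut_all_of_not_reachable (fun h => hR22 h.symm)
      · -- K is an ({s₁,s₂},{t₁,t₂})-cut
        refine le_trans (min_le_left b₁ b₂) (hb₁.2 ⟨K, ⟨hK.1, ?_⟩, hcap⟩)
        intro u v hu hv p hp
        revert p hp
        simp only [Set.mem_insert_iff, Set.mem_singleton_iff] at hu hv
        rcases hu with rfl | rfl <;> rcases hv with rfl | rfl
        · exact cut_all_of_not_reachable hR11
        · exact cut_all_of_not_reachable h1
        · exact cut_all_of_not_reachable h2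
        · exact cut_all_of_not_reachable hR22
  exact le_antisymm (le_min hab₁ hab₂) key
end
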